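/- arXiv:2206.14536 — 7 statements merged into one kernel-verified Lean document; each statement's English description precedes it below -/
import Mathlib

section
/- Let G = (V,E) be a simple graph with n vertices and m edges, let η : E → {1,…,m} be a bijection, and let e ∈ E. Then for every integer i with 1 ≤ i ≤ n − 2, one has i·|NB_{i+1}(G,e)| ≤ (m − i)·|NB_i(G,e)|. -/
open Finset

variable {V : Type*}

/-- The number of proper colorings of `G` using the colors `{1, …, k}`. -/
noncomputable def propCol (G : SimpleGraph V) (k : ℕ) : ℕ :=
  Set.ncard {f : V → ℕ | (∀ v, f v ∈ Finset.Icc 1 k) ∧ ∀ ⦃a b : V⦄, G.Adj a b → f a ≠ f b}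

/-- The number of `L`-colorings of `G`, for an assignment `L` of color lists. -/
noncomputable def listCol (G : SimpleGraph V) (L : V → Finset ℕ) : ℕ :=
  Set.ncard {f : V → ℕ | (∀ v, f v ∈ L v) ∧ ∀ ⦃a b : V⦄, G.Adj a b → f a ≠ f b}

/-- `α(uv) = |L(u) \ L(v)|`, symmetrized (when `|L(u)| = |L(v)|` one has
`|L(u) \ L(v)| = |L(v) \ L(u)|`, so this is exactly `|L(u) \ L(v)|`). -/
noncomputable def alphaL (L : V → Finset ℕ) : Sym2 V → ℕ :=
  Sym2.lift ⟨fun a b => ((L a) \ (L b)).card ⊔ ((L b) \ (L a)).card,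
    fun a b => by simp [sup_comm]⟩

/-- `B` is the edge set of a broken cycle of `G` with respect to the edge ordering `η`:
the edge set of a path `v₁v₂⋯v_r` of `G` with `r ≥ 3` such that `v₁v_r ∈ E(G)` and
`η(v₁v_r) < η(v_iv_{i+1})` for each `i`. -/
def IsBrokenCycle [DecidableEq V] (G : SimpleGraph V) (η : Sym2 V → ℕ)
    (B : Finset (Sym2 V)) : Prop :=
  ∃ (u w : V) (p : G.Walk u w), p.IsPath ∧ 2 ≤ p.length ∧ G.Adj u w ∧
    (∀ f ∈ p.edges, η s(u, w) < η f) ∧ B = p.edges.toFinset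

/-- `NB_i(G)`: the collection of `i`-element subsets of `E(G)` containing no broken cycle. -/
def NBset [DecidableEq V] (G : SimpleGraph V) (η : Sym2 V → ℕ) (i : ℕ) :
    Set (Finset (Sym2 V)) :=
  {A : Finset (Sym2 V) | ↑A ⊆ G.edgeSet ∧ A.card = i ∧
    ∀ B : Finset (Sym2 V), IsBrokenCycle G η B → ¬ B ⊆ A}

/-- `|NB_i(G)|`. -/
noncomputable def NBcard [DecidableEq V] (G : SimpleGraph V) (η : Sym2 V → ℕ) (i : ℕ) : ℕ :=
  Set.ncard (NBset G η i)

/-- `|NB_i(G, e)|`: the number of `i`-element subsets of `E(G)` that contain `e`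
and contain no broken cycle. -/
noncomputable def NBe [DecidableEq V] (G : SimpleGraph V) (η : Sym2 V → ℕ)
    (i : ℕ) (e : Sym2 V) : ℕ :=
  Set.ncard {A : Finset (Sym2 V) | A ∈ NBset G η i ∧ e ∈ A}

/-- `Q_η(G, e, x)`, where `n` is the number of vertices of `G`. -/
noncomputable def Qeta [DecidableEq V] [Fintype V] (G : SimpleGraph V)
    (η : Sym2 V → ℕ) (e : Sym2 V) (x : ℝ) : ℝ :=
  (∑ i ∈ (Finset.Icc 1 (Fintype.card V - 1)).filter (fun i => Odd i),
      (NBe G η i e : ℝ) / i * x ^ (Fintype.card V - i)) -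
  ∑ i ∈ (Finset.Icc 2 (Fintype.card V - 1)).filter (fun i => Even i),
      (NBe G η i e : ℝ) * x ^ (Fintype.card V - i)

/-- The contraction `G/e` of the edge `e = uv`: the vertex `v` is merged into `u`
(so `v` becomes an isolated vertex), loops are removed and parallel edges are merged. -/
def contractE (G : SimpleGraph V) (u v : V) : SimpleGraph V :=
  SimpleGraph.fromRel (fun a b =>
    (G.Adj a b ∧ a ≠ v ∧ b ≠ v) ∨ (a = u ∧ b ≠ v ∧ G.Adj v b))

/-- The number of triangles (3-cliques) of `H`. -/
noncomputable def triangleCount (H : SimpleGraph V) : ℕ :=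
  Set.ncard {s : Finset V | H.IsNClique 3 s}

/-- `|NB₂(H)| = C(|E(H)|, 2) − △(H)`: the number of 2-element subsets of `E(H)`
containing no broken cycle (this count is independent of the edge ordering). -/
noncomputable def NB2 (H : SimpleGraph V) : ℕ :=
  Nat.choose (H.edgeSet.ncard) 2 - triangleCount H

/-- `C` is the edge set of a 4-cycle of `G`. -/
def IsFourCycle [DecidableEq V] (G : SimpleGraph V) (C : Finset (Sym2 V)) : Prop :=
  ∃ (u : V) (p : G.Walk u u), p.IsCycle ∧ p.length = 4 ∧ C = p.edges.toFinset

/-- The number of 4-cycles of `G` containing the edge `e`. -/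
noncomputable def fourCyclesOn [DecidableEq V] (G : SimpleGraph V) (e : Sym2 V) : ℕ :=
  Set.ncard {C : Finset (Sym2 V) | IsFourCycle G C ∧ e ∈ C}

/-- `c₄(G)`: the maximum over edges `e` of the number of 4-cycles of `G` containing `e`,
i.e. the least `r` such that every edge lies in at most `r` 4-cycles. -/
noncomputable def c4 [DecidableEq V] (G : SimpleGraph V) : ℕ :=
  sSup {r : ℕ | ∃ e ∈ G.edgeSet, r = fourCyclesOn G e}

/-- `β(T)` for the connected component `c` of `H`: the number of colors lying in every
list `L w` for `w` a vertex of the component `c`. -/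
noncomputable def betaComp (L : V → Finset ℕ) (H : SimpleGraph V)
    (c : H.ConnectedComponent) : ℕ :=
  Set.ncard {x : ℕ | ∀ w : V, H.connectedComponentMk w = c → x ∈ L w}

/-- `∏_j β(T_j)` over the connected components `T_j` of the spanning subgraph `H`. -/
noncomputable def betaProd (L : V → Finset ℕ) (H : SimpleGraph V) : ℕ :=
  ∏ᶠ c : H.ConnectedComponent, betaComp L H c

/-
`NB(G)` is closed under taking subsets. Double count the pairs `(A, B)` with
`A ∈ NB_{i+1}(G,e)`, `B ∈ NB_i(G,e)` and `B ⊆ A`. Each `A` lies above the `i` sets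
`A \ {f}`, `f ∈ A \ {e}`, and each `B` lies below at most the `m - i` sets `B ∪ {f}`,
`f ∈ E \ B`.
-/

namespace Finset

variable {α : Type*} [DecidableEq α]

theorem card_mul_le_card_mul_sub_of_erase_mem {𝒜 ℬ : Finset (Finset α)} {E : Finset α}
    {a : α} {i : ℕ} (h𝒜 : ∀ A ∈ 𝒜, A ⊆ E ∧ a ∈ A ∧ #A = i + 1)
    (hℬ : ∀ B ∈ ℬ, B ⊆ E ∧ #B = i) (herase : ∀ A ∈ 𝒜, ∀ x ∈ A, x ≠ a → A.erase x ∈ ℬ) :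
    #𝒜 * i ≤ #ℬ * (#E - i) := by
  refine card_mul_le_card_mul (fun A B => B ⊆ A) (fun A hA => ?_) (fun B hB => ?_)
  · obtain ⟨-, haA, hA_card⟩ := h𝒜 A hA
    calc i = #(A.erase a) := by rw [card_erase_of_mem haA, hA_card, Nat.add_sub_cancel]
      _ = #((A.erase a).image A.erase) :=
          (card_image_of_injOn ((erase_injOn A).mono (erase_subset a A))).symm
      _ ≤ #(ℬ.bipartiteAbove (fun A B => B ⊆ A) A) := card_le_card fun B hB => by
          obtain ⟨x, hx, rfl⟩ := mem_image.mp hB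
          exact (mem_bipartiteAbove _).mpr
            ⟨herase A hA x (mem_of_mem_erase hx) (ne_of_mem_erase hx), erase_subset x A⟩
  · obtain ⟨hBE, hB_card⟩ := hℬ B hB
    calc #(𝒜.bipartiteBelow (fun A B => B ⊆ A) B) ≤ #((E \ B).image (insert · B)) :=
          card_le_card fun A hA => by
            obtain ⟨hA, hBA⟩ := (mem_bipartiteBelow _).mp hA
            obtain ⟨hAE, -, hA_card⟩ := h𝒜 A hA
            obtain ⟨x, hxB, rfl⟩ := exists_eq_insert_iff.mpr ⟨hBA, by rw [hB_card, hA_card]⟩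
            exact mem_image_of_mem _ (mem_sdiff.mpr ⟨hAE (mem_insert_self x B), hxB⟩)
      _ ≤ #(E \ B) := card_image_le
      _ = #E - i := by rw [card_sdiff_of_subset hBE, hB_card]

end Finset

namespace Set

variable {α : Type*} [DecidableEq α]

theorem mul_ncard_le_sub_mul_ncard_of_erase_mem {𝒜 ℬ : Set (Finset α)} {E : Finset α}
    {a : α} {i : ℕ} (h𝒜 : ∀ A ∈ 𝒜, A ⊆ E ∧ a ∈ A ∧ #A = i + 1)
    (hℬ : ∀ B ∈ ℬ, B ⊆ E ∧ #B = i) (herase : ∀ A ∈ 𝒜, ∀ x ∈ A, x ≠ a → A.erase x ∈ ℬ) :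
    (i : ℤ) * 𝒜.ncard ≤ (#E - i) * ℬ.ncard := by
  lift 𝒜 to Finset (Finset α) using E.powerset.finite_toSet.subset fun A hA => by
    simpa using (h𝒜 A hA).1
  lift ℬ to Finset (Finset α) using E.powerset.finite_toSet.subset fun B hB => by
    simpa using (hℬ B hB).1
  simp only [ncard_coe_finset]
  have hcount := Finset.card_mul_le_card_mul_sub_of_erase_mem h𝒜 hℬ herase
  rcases ℬ.eq_empty_or_nonempty with rfl | ⟨B, hB⟩
  · rw [Finset.card_empty, zero_mul, Nat.le_zero, mul_comm] at hcount
    simp [← Nat.cast_mul, hcount]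
  · have hiE : i ≤ #E := (hℬ B hB).2 ▸ Finset.card_le_card (hℬ B hB).1
    have hcount_int : ((#𝒜 * i : ℕ) : ℤ) ≤ ((#ℬ * (#E - i) : ℕ) : ℤ) :=
      Nat.cast_le.mpr hcount
    push_cast [hiE] at hcount_int
    linarith

end Set

theorem erase_mem_NBset [DecidableEq V] {G : SimpleGraph V} {η : Sym2 V → ℕ} {k : ℕ}
    {A : Finset (Sym2 V)} (hA : A ∈ NBset G η (k + 1)) {x : Sym2 V} (hx : x ∈ A) :
    A.erase x ∈ NBset G η k := by
  obtain ⟨hAE, hA_card, hA_nb⟩ := hA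
  refine ⟨(A.coe_erase x ▸ Set.sdiff_subset).trans hAE, ?_,
    fun B hB hBA => hA_nb B hB (hBA.trans (A.erase_subset x))⟩
  rw [Finset.card_erase_of_mem hx, hA_card, Nat.add_sub_cancel]

theorem subset_edgeFinset_of_mem_NBset [DecidableEq V] {G : SimpleGraph V} [Fintype G.edgeSet]
    {η : Sym2 V → ℕ} {k : ℕ} {A : Finset (Sym2 V)} (hA : A ∈ NBset G η k) : A ⊆ G.edgeFinset :=
  fun _ hx => SimpleGraph.mem_edgeFinset.mpr (hA.1 hx)

theorem stmt5_general [Fintype V] [DecidableEq V] (G : SimpleGraph V) [DecidableRel G.Adj]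
    (m : ℕ) (hm : m = G.edgeFinset.card)
    (η : Sym2 V → ℕ)
    (e : Sym2 V)
    (i : ℕ) :
    (i : ℤ) * (NBe G η (i + 1) e : ℤ) ≤ ((m : ℤ) - i) * (NBe G η i e : ℤ) := by
  subst hm
  exact Set.mul_ncard_le_sub_mul_ncard_of_erase_mem
    (fun A ⟨hA, heA⟩ => ⟨subset_edgeFinset_of_mem_NBset hA, heA, hA.2.1⟩)
    (fun B ⟨hB, _⟩ => ⟨subset_edgeFinset_of_mem_NBset hB, hB.2.1⟩)
    fun A ⟨hA, heA⟩ _ hx hxe =>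
      ⟨erase_mem_NBset hA hx, Finset.mem_erase_of_ne_of_mem hxe.symm heA⟩

theorem stmt5 [Fintype V] [DecidableEq V] (G : SimpleGraph V) [DecidableRel G.Adj]
    (n m : ℕ) (hn : n = Fintype.card V) (hm : m = G.edgeFinset.card)
    (η : Sym2 V → ℕ) (hη : Set.BijOn η G.edgeSet (Set.Icc 1 m))
    (e : Sym2 V) (he : e ∈ G.edgeSet)
    (i : ℕ) (hi1 : 1 ≤ i) (hi2 : i ≤ n - 2) :
    (i : ℤ) * (NBe G η (i + 1) e : ℤ) ≤ ((m : ℤ) - i) * (NBe G η i e : ℤ) :=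
  stmt5_general G m hm η e i
end

section
/- Let G = (V,E) be a simple graph with n ≥ 3 vertices and m edges, let η : E → {1,…,m} be a bijection, let e ∈ E, and let x be a real number with x ≥ 0. Then Q_η(G,e,x) ≥ Σ_{1 ≤ i ≤ n−1, i odd} (|NB_i(G,e)|/i)·(x − m + i)·x^{n−i−1}. -/
open Finset

variable {V : Type*}

/-!
Write `a i = |NB_i(G, e)|`. Deleting an edge other than `e` from a set in `NB_{j+1}(G, e)` leaves
a set in `NB_j(G, e)`, so double counting gives `j a_{j+1} ≤ (m - j) a_j`. Splitting each odd term
as `a_j / j x^{n-j} = a_j / j (x - m + j) x^{n-j-1} + a_j / j (m - j) x^{n-j-1}`, the second part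
dominates the even term `a_{j+1} x^{n-j-1}` that follows it.
-/

namespace Finset

variable {α : Type*} [DecidableEq α] {𝒩 : Finset (Finset α)} {U : Finset α}

/-- `(A, f) ↦ (A.erase f, f)` embeds the pairs with `A` in the upper slice and `f ∈ A.erase e`
into the pairs with `B` in the lower slice and `f ∈ U \ B`. -/
theorem mul_card_filter_card_succ_mem_le (h𝒩 : IsLowerSet (𝒩 : Set (Finset α)))
    (hU : ∀ A ∈ 𝒩, A ⊆ U) (e : α) (j : ℕ) :
    j * #{A ∈ 𝒩 | #A = j + 1 ∧ e ∈ A} ≤ (#U - j) * #{A ∈ 𝒩 | #A = j ∧ e ∈ A} := by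
  set upper := {A ∈ 𝒩 | #A = j + 1 ∧ e ∈ A}
  set lower := {A ∈ 𝒩 | #A = j ∧ e ∈ A}
  have h_upper : #(upper.sigma fun A => A.erase e) = j * #upper := by
    rw [card_sigma, sum_const_nat fun A hA => ?_, mul_comm]
    obtain ⟨-, hcard, heA⟩ := mem_filter.1 hA
    rw [card_erase_of_mem heA, hcard, Nat.add_sub_cancel]
  have h_lower : #(lower.sigma fun B => U \ B) = (#U - j) * #lower := by
    rw [card_sigma, sum_const_nat fun B hB => ?_, mul_comm]
    obtain ⟨hB, hcard, -⟩ := mem_filter.1 hB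
    rw [card_sdiff_of_subset (hU B hB), hcard]
  rw [← h_upper, ← h_lower]
  refine card_le_card_of_injOn (fun p => ⟨p.1.erase p.2, p.2⟩) ?_ ?_
  · rintro ⟨A, f⟩ hp
    obtain ⟨hA, hfA⟩ := mem_sigma.1 hp
    obtain ⟨hA𝒩, hcard, heA⟩ := mem_filter.1 hA
    obtain ⟨hfe, hfA⟩ := mem_erase.1 hfA
    refine mem_sigma.2 ⟨mem_filter.2 ⟨h𝒩 (erase_subset f A) hA𝒩, ?_, mem_erase.2 ⟨hfe.symm, heA⟩⟩,
      mem_sdiff.2 ⟨hU A hA𝒩 hfA, notMem_erase f A⟩⟩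
    rw [card_erase_of_mem hfA, hcard, Nat.add_sub_cancel]
  · rintro ⟨A, f⟩ hp ⟨A', f'⟩ hp' heq
    obtain ⟨hAA', rfl⟩ : A.erase f = A'.erase f' ∧ f = f' := by simpa using heq
    have hfA : f ∈ A := mem_of_mem_erase (mem_sigma.1 hp).2
    have hfA' : f ∈ A' := mem_of_mem_erase (mem_sigma.1 hp').2
    rw [← insert_erase hfA, ← insert_erase hfA', hAA']

theorem cast_mul_card_filter_card_succ_mem_le {R : Type*} [CommRing R] [PartialOrder R]
    [IsOrderedRing R] (h𝒩 : IsLowerSet (𝒩 : Set (Finset α))) (hU : ∀ A ∈ 𝒩, A ⊆ U)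
    (e : α) (j : ℕ) :
    (j : R) * #{A ∈ 𝒩 | #A = j + 1 ∧ e ∈ A} ≤ ((#U : R) - j) * #{A ∈ 𝒩 | #A = j ∧ e ∈ A} := by
  by_cases hj : j ≤ #U
  · have := Nat.mono_cast (α := R) (mul_card_filter_card_succ_mem_le h𝒩 hU e j)
    push_cast [Nat.cast_sub hj] at this
    exact this
  · have h_empty : ∀ i, #U < i → #{A ∈ 𝒩 | #A = i ∧ e ∈ A} = 0 := fun i hi =>
      card_eq_zero.2 <| filter_eq_empty_iff.2 fun A hA ⟨hcard, _⟩ =>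
        absurd (card_le_card (hU A hA)) (by omega)
    rw [h_empty j (by omega), h_empty (j + 1) (by omega)]
    simp

end Finset

section AlternatingSum

variable {𝕜 : Type*} [Field 𝕜] [LinearOrder 𝕜] [IsStrictOrderedRing 𝕜]

theorem sum_odd_mul_le_sub_sum_even {a : ℕ → 𝕜} {m x : 𝕜} (n : ℕ) (hx : 0 ≤ x)
    (ha : ∀ i, 0 ≤ a i) (hrec : ∀ j, 1 ≤ j → j * a (j + 1) ≤ (m - j) * a j) :
    ∑ i ∈ Icc 1 (n - 1) with Odd i, a i / i * (x - m + i) * x ^ (n - i - 1) ≤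
      (∑ i ∈ Icc 1 (n - 1) with Odd i, a i / i * x ^ (n - i)) -
        ∑ i ∈ Icc 2 (n - 1) with Even i, a i * x ^ (n - i) := by
  set odd := {i ∈ Icc 1 (n - 1) | Odd i}
  have h_split : ∑ i ∈ odd, a i / i * x ^ (n - i) =
      ∑ i ∈ odd, a i / i * (x - m + i) * x ^ (n - i - 1) +
        ∑ i ∈ odd, a i / i * (m - i) * x ^ (n - i - 1) := by
    rw [← sum_add_distrib]
    refine sum_congr rfl fun i hi => ?_
    have hi := mem_Icc.1 (mem_filter.1 hi).1
    conv_lhs => rw [show n - i = n - i - 1 + 1 by omega, pow_succ]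
    ring
  have h_even_le : ∑ i ∈ Icc 2 (n - 1) with Even i, a i * x ^ (n - i) ≤
      ∑ j ∈ odd, a (j + 1) * x ^ (n - j - 1) := by
    simp_rw [Nat.sub_sub]
    refine le_of_le_of_eq ?_ (sum_map odd (addRightEmbedding 1) fun i => a i * x ^ (n - i))
    refine sum_le_sum_of_subset_of_nonneg (fun i hi => ?_) fun i _ _ => ?_
    · obtain ⟨hi, heven⟩ := mem_filter.1 hi
      refine mem_map.2 ⟨i - 1, mem_filter.2 ⟨?_, ?_⟩, ?_⟩
      all_goals simp only [mem_Icc, Nat.odd_iff, Nat.even_iff, addRightEmbedding_apply] at *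
      all_goals omega
    · exact mul_nonneg (ha i) (pow_nonneg hx _)
  have h_term_le : ∑ j ∈ odd, a (j + 1) * x ^ (n - j - 1) ≤
      ∑ j ∈ odd, a j / j * (m - j) * x ^ (n - j - 1) := by
    refine sum_le_sum fun j hj => mul_le_mul_of_nonneg_right ?_ (pow_nonneg hx _)
    have hj : 1 ≤ j := (mem_Icc.1 (mem_filter.1 hj).1).1
    have hj_pos : (0 : 𝕜) < j := by exact_mod_cast hj
    rw [div_mul_eq_mul_div, le_div_iff₀ hj_pos, mul_comm, mul_comm (a j)]
    exact hrec j hj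
  rw [h_split]
  linarith

end AlternatingSum

section BrokenCycles

variable [Fintype V] [DecidableEq V] (G : SimpleGraph V) [DecidableRel G.Adj] (η : Sym2 V → ℕ)

open scoped Classical in
noncomputable def noBrokenCycleSets : Finset (Finset (Sym2 V)) :=
  {A ∈ G.edgeFinset.powerset | ∀ B, IsBrokenCycle G η B → ¬ B ⊆ A}

theorem isLowerSet_noBrokenCycleSets :
    IsLowerSet (noBrokenCycleSets G η : Set (Finset (Sym2 V))) := by
  intro A B hBA hA
  simp only [noBrokenCycleSets, coe_filter, mem_powerset, Set.mem_ofPred_eq] at hA ⊢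
  exact ⟨hBA.trans hA.1, fun C hC hCB => hA.2 C hC (hCB.trans hBA)⟩

theorem NBe_eq_card (i : ℕ) (e : Sym2 V) :
    NBe G η i e = #{A ∈ noBrokenCycleSets G η | #A = i ∧ e ∈ A} := by
  rw [NBe, ← Set.ncard_coe_finset]
  congr 1
  ext A
  simp only [NBset, noBrokenCycleSets, coe_filter, mem_filter, mem_powerset, Set.mem_ofPred_eq,
    ← SimpleGraph.coe_edgeFinset, coe_subset]
  tauto

theorem cast_mul_NBe_succ_le (e : Sym2 V) (j : ℕ) :
    (j : ℝ) * NBe G η (j + 1) e ≤ ((#G.edgeFinset : ℝ) - j) * NBe G η j e := by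
  classical
  rw [NBe_eq_card, NBe_eq_card]
  exact cast_mul_card_filter_card_succ_mem_le (isLowerSet_noBrokenCycleSets G η)
    (fun A hA => mem_powerset.1 (filter_subset _ _ hA)) e j

end BrokenCycles

theorem stmt6_general [Fintype V] [DecidableEq V] (G : SimpleGraph V) [DecidableRel G.Adj]
    (n m : ℕ) (hn : n = Fintype.card V) (hm : m = G.edgeFinset.card)
    (η : Sym2 V → ℕ) (e : Sym2 V) (x : ℝ) (hx : 0 ≤ x) :
    Qeta G η e x ≥
      ∑ i ∈ (Finset.Icc 1 (n - 1)).filter (fun i => Odd i),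
        (NBe G η i e : ℝ) / i * (x - m + i) * x ^ (n - i - 1) := by
  subst hn hm
  exact sum_odd_mul_le_sub_sum_even _ hx (fun _ => Nat.cast_nonneg _)
    fun j _ => cast_mul_NBe_succ_le G η e j

theorem stmt6 [Fintype V] [DecidableEq V] (G : SimpleGraph V) [DecidableRel G.Adj]
    (n m : ℕ) (hn : n = Fintype.card V) (hm : m = G.edgeFinset.card) (hn3 : 3 ≤ n)
    (η : Sym2 V → ℕ) (hη : Set.BijOn η G.edgeSet (Set.Icc 1 m))
    (e : Sym2 V) (he : e ∈ G.edgeSet) (x : ℝ) (hx : 0 ≤ x) :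
    Qeta G η e x ≥
      ∑ i ∈ (Finset.Icc 1 (n - 1)).filter (fun i => Odd i),
        (NBe G η i e : ℝ) / i * (x - m + i) * x ^ (n - i - 1) :=
  stmt6_general G n m hn hm η e x hx
end

section
/- Let G = (V,E) be a simple graph with n ≥ 3 vertices and m edges where n is even, let η : E → {1,…,m} be a bijection, let e ∈ E, and let x be a real number with x ≥ 0. Then Q_η(G,e,x) ≥ Σ_{1 ≤ i ≤ n−3, i odd} (|NB_i(G,e)|/i)·(x − m + i)·x^{n−i−1} + (|NB_{n−1}(G,e)|/(n−1))·x. -/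
open Finset

variable {V : Type*}

lemma key [Fintype V] [DecidableEq V] (G : SimpleGraph V) [DecidableRel G.Adj]
    (η : Sym2 V → ℕ) (e : Sym2 V) (m j : ℕ) (hm : m = G.edgeFinset.card) (hj : 1 ≤ j) :
    (j : ℝ) * NBe G η (j+1) e ≤ ((m : ℝ) - j) * NBe G η j e := by
  classical
  set S : ℕ → Finset (Finset (Sym2 V)) := fun k =>
    G.edgeFinset.powerset.filter (fun A => A.card = k ∧ e ∈ A ∧
      ∀ B, IsBrokenCycle G η B → ¬ B ⊆ A) with hS
  have hScard : ∀ k, NBe G η k e = (S k).card := by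
    intro k
    rw [NBe, ← Set.ncard_coe_finset]
    congr 1
    ext A
    simp only [hS, Set.mem_setOf_eq, coe_filter, Finset.mem_powerset, NBset,
      Set.mem_setOf_eq]
    constructor
    · rintro ⟨⟨h1, h2, h3⟩, h4⟩
      exact ⟨fun f hf => SimpleGraph.mem_edgeFinset.2 (h1 hf), h2, h4, h3⟩
    · rintro ⟨h1, h2, h4, h3⟩
      exact ⟨⟨fun f hf => SimpleGraph.mem_edgeFinset.1 (h1 hf), h2, h3⟩, h4⟩
  -- double counting in ℕ
  have hnat : (S (j+1)).card * j ≤ (S j).card * (m - j) := by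
    apply Finset.card_mul_le_card_mul (fun A A' => A' ⊆ A)
    · -- each A in S(j+1) has at least j subsets in S j
      intro A hA
      simp only [hS, mem_filter, Finset.mem_powerset] at hA
      obtain ⟨hAE, hAcard, heA, hAnb⟩ := hA
      have : (A.erase e).card = j := by rw [card_erase_of_mem heA, hAcard]; omega
      have hAcard' : (A.erase e).card = j := this
      calc j = ((A.erase e).image (fun f => A.erase f)).card := by
              rw [Finset.card_image_of_injOn, this]
              intro f hf g hg hfg
              exact A.erase_injOn (mem_of_mem_erase hf) (mem_of_mem_erase hg) hfg
        _ ≤ _ := by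
              apply Finset.card_le_card
              intro A' hA'
              simp only [mem_image] at hA'
              obtain ⟨f, hf, rfl⟩ := hA'
              have hfA : f ∈ A := mem_of_mem_erase hf
              have hfe : f ≠ e := ne_of_mem_erase hf
              simp only [Finset.bipartiteAbove, hS, mem_filter, Finset.mem_powerset]
              refine ⟨⟨(erase_subset f A).trans hAE, ?_, ?_, ?_⟩, erase_subset f A⟩
              · rw [card_erase_of_mem hfA, hAcard]; omega
              · exact mem_erase.2 ⟨fun h => hfe h.symm, heA⟩
              · intro B hB hBsub
                exact hAnb B hB (hBsub.trans (erase_subset f A))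
    · -- each A' in S j has at most m - j supersets in S (j+1)
      intro A' hA'
      simp only [hS, mem_filter, Finset.mem_powerset] at hA'
      obtain ⟨hAE, hAcard, heA, hAnb⟩ := hA'
      calc (Finset.bipartiteBelow (fun A A'' => A'' ⊆ A) (S (j+1)) A').card
          ≤ ((G.edgeFinset \ A').image (fun f => insert f A')).card := by
            apply Finset.card_le_card
            intro A hA
            simp only [Finset.bipartiteBelow, hS, mem_filter, Finset.mem_powerset] at hA
            obtain ⟨⟨hAE', hAc, _, _⟩, hsub⟩ := hA
            have : (A \ A').Nonempty := by
              rw [← Finset.card_pos, card_sdiff_of_subset hsub, hAc, hAcard]; omega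
            obtain ⟨f, hf⟩ := this
            simp only [mem_sdiff] at hf
            simp only [mem_image]
            refine ⟨f, by simp [mem_sdiff, hAE' hf.1, hf.2], ?_⟩
            apply Finset.eq_of_subset_of_card_le
            · exact insert_subset hf.1 hsub
            · rw [hAc, card_insert_of_notMem hf.2, hAcard]
        _ ≤ (G.edgeFinset \ A').card := Finset.card_image_le
        _ = m - j := by rw [card_sdiff_of_subset hAE, hAcard, hm]
  -- to ℝ
  rw [hScard, hScard]
  rcases Nat.eq_zero_or_pos (S j).card with h0 | hpos
  · have : (S (j+1)).card = 0 := by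
      rw [h0, Nat.zero_mul, Nat.le_zero, Nat.mul_eq_zero] at hnat
      rcases hnat with h | h
      · exact h
      · omega
    simp [h0, this]
  · have hjm : j ≤ m := by
      obtain ⟨A, hA⟩ := Finset.card_pos.1 hpos
      simp only [hS, mem_filter, Finset.mem_powerset] at hA
      rw [hm, ← hA.2.1]
      exact Finset.card_le_card hA.1
    calc ((j : ℝ)) * (S (j+1)).card = ((S (j+1)).card * j : ℕ) := by push_cast; ring
      _ ≤ ((S j).card * (m - j) : ℕ) := by exact_mod_cast hnat
      _ = ((m : ℝ) - j) * (S j).card := by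
          push_cast [Nat.cast_sub hjm]; ring

theorem stmt7 [Fintype V] [DecidableEq V] (G : SimpleGraph V) [DecidableRel G.Adj]
    (n m : ℕ) (hn : n = Fintype.card V) (hm : m = G.edgeFinset.card)
    (hn3 : 3 ≤ n) (hne : Even n)
    (η : Sym2 V → ℕ) (hη : Set.BijOn η G.edgeSet (Set.Icc 1 m))
    (e : Sym2 V) (he : e ∈ G.edgeSet) (x : ℝ) (hx : 0 ≤ x) :
    Qeta G η e x ≥
      (∑ i ∈ (Finset.Icc 1 (n - 3)).filter (fun i => Odd i),
        (NBe G η i e : ℝ) / i * (x - m + i) * x ^ (n - i - 1)) +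
      (NBe G η (n - 1) e : ℝ) / ((n : ℝ) - 1) * x := by
  classical
  have hn2 : n % 2 = 0 := Nat.even_iff.mp hne
  have hn4 : 4 ≤ n := by omega
  set O3 := (Finset.Icc 1 (n - 3)).filter (fun i => Odd i) with hO3
  have hsplit : (Finset.Icc 1 (n - 1)).filter (fun i => Odd i) = insert (n - 1) O3 := by
    ext i
    simp only [hO3, mem_filter, mem_Icc, mem_insert, Nat.odd_iff]
    omega
  have hnotmem : n - 1 ∉ O3 := by
    simp only [hO3, mem_filter, mem_Icc]
    omega
  have heven : (Finset.Icc 2 (n - 1)).filter (fun i => Even i) = O3.image (· + 1) := by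
    ext i
    simp only [hO3, mem_filter, mem_Icc, mem_image, Nat.even_iff, Nat.odd_iff]
    constructor
    · rintro ⟨⟨h1, h2⟩, h3⟩
      exact ⟨i - 1, ⟨⟨by omega, by omega⟩, by omega⟩, by omega⟩
    · rintro ⟨j, ⟨⟨h1, h2⟩, h3⟩, rfl⟩
      omega
  have hinj : ∀ i ∈ O3, ∀ j ∈ O3, i + 1 = j + 1 → i = j := by
    intro i _ j _ h; omega
  rw [ge_iff_le, Qeta, ← hn, hsplit, Finset.sum_insert hnotmem, heven,
    Finset.sum_image hinj]
  have hc1 : ((n - 1 : ℕ) : ℝ) = (n : ℝ) - 1 := by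
    rw [Nat.cast_sub (by omega)]; norm_num
  have hc2 : x ^ (n - (n - 1)) = x := by
    rw [show n - (n - 1) = 1 by omega, pow_one]
  rw [hc1, hc2]
  have hmain : ∀ i ∈ O3,
      (NBe G η i e : ℝ) / i * (x - m + i) * x ^ (n - i - 1)
        + (NBe G η (i + 1) e : ℝ) * x ^ (n - (i + 1))
      ≤ (NBe G η i e : ℝ) / i * x ^ (n - i) := by
    intro i hi
    simp only [hO3, mem_filter, mem_Icc] at hi
    obtain ⟨⟨hi1, hi2⟩, _⟩ := hi
    have hipos : (0 : ℝ) < i := by exact_mod_cast hi1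
    have hk := key G η e m i hm hi1
    have hstep : (NBe G η (i + 1) e : ℝ) ≤ (NBe G η i e : ℝ) / i * ((m : ℝ) - i) := by
      rw [div_mul_eq_mul_div, le_div_iff₀ hipos]
      nlinarith [hk]
    have hy : (0 : ℝ) ≤ x ^ (n - i - 1) := pow_nonneg hx _
    have hxp : x ^ (n - i) = x ^ (n - i - 1) * x := by
      rw [← pow_succ]
      congr 1
      omega
    have hxp2 : (n : ℕ) - (i + 1) = n - i - 1 := by omega
    rw [hxp, hxp2]
    nlinarith [mul_le_mul_of_nonneg_right hstep hy]
  have hsum := Finset.sum_le_sum hmain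
  rw [Finset.sum_add_distrib] at hsum
  linarith [hsum]
end

section
/- Let G = (V,E) be a simple graph with exactly n = 4 vertices and m edges, let η : E → {1,…,m} be a bijection, let e ∈ E, and let x be a real number with x ≥ m − 1. Then Q_η(G,e,x) ≥ (|NB₂(G/e)|/3)·x. -/
open Finset

variable {V : Type*}

section BC
variable {V : Type*} [DecidableEq V]

private def cmap (u v : V) : Sym2 V → Sym2 V :=
  Sym2.map (fun z => if z = v then u else z)

private lemma cmap_pair (u v a b : V) :
    cmap u v s(a, b) = s(if a = v then u else a, if b = v then u else b) :=
  Sym2.map_pair_eq _ _ _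

private lemma cmap_e (u v : V) : cmap u v s(u, v) = s(u, u) := by
  rw [cmap_pair]; by_cases h : u = v <;> simp [h]

private lemma cmap_mem_edgeSet {G : SimpleGraph V} {u v : V} (huv : G.Adj u v)
    {h : Sym2 V} (hh : h ∈ G.edgeSet) (hne : h ≠ s(u, v)) :
    cmap u v h ∈ (contractE G u v).edgeSet := by
  induction h using Sym2.ind with
  | _ a b =>
    rw [SimpleGraph.mem_edgeSet] at hh
    rw [cmap_pair, SimpleGraph.mem_edgeSet, contractE, SimpleGraph.fromRel_adj]
    by_cases ha : a = v <;> by_cases hb : b = v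
    · exact absurd (ha.trans hb.symm) hh.ne
    · subst ha
      have hbu : u ≠ b := by
        rintro rfl; exact hne (Sym2.eq_swap)
      simp only [if_pos rfl, if_neg hb]
      exact ⟨hbu, Or.inl (Or.inr ⟨rfl, hb, hh⟩)⟩
    · subst hb
      have hau : a ≠ u := by
        rintro rfl; exact hne rfl
      simp only [if_pos rfl, if_neg ha]
      exact ⟨hau, Or.inr (Or.inr ⟨rfl, ha, hh.symm⟩)⟩
    · simp only [if_neg ha, if_neg hb]
      exact ⟨hh.ne, Or.inl (Or.inl ⟨hh, ha, hb⟩)⟩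

private lemma exists_lift {G : SimpleGraph V} {u v : V} {f' : Sym2 V}
    (hf : f' ∈ (contractE G u v).edgeSet) :
    ∃ g ∈ G.edgeSet, cmap u v g = f' := by
  induction f' using Sym2.ind with
  | _ x y =>
    rw [SimpleGraph.mem_edgeSet, contractE, SimpleGraph.fromRel_adj] at hf
    obtain ⟨hxy, hrel⟩ := hf
    rcases hrel with (⟨h1, h2, h3⟩ | ⟨h1, h2, h3⟩) | (⟨h1, h2, h3⟩ | ⟨h1, h2, h3⟩)
    · exact ⟨s(x, y), h1, by rw [cmap_pair]; simp [h2, h3]⟩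
    · refine ⟨s(v, y), h3, ?_⟩
      rw [cmap_pair]; simp [h2, h1]
    · exact ⟨s(x, y), h1.symm, by rw [cmap_pair]; simp [h2, h3]⟩
    · refine ⟨s(v, x), h3, ?_⟩
      rw [cmap_pair]; simp only [if_pos rfl, if_neg h2]
      rw [h1]; exact Sym2.eq_swap

private lemma contract_ne_v {G : SimpleGraph V} {u v x y : V} (huv : G.Adj u v)
    (h : (contractE G u v).Adj x y) : x ≠ v ∧ y ≠ v := by
  rw [contractE, SimpleGraph.fromRel_adj] at h
  obtain ⟨-, h⟩ := h
  rcases h with (⟨_, h2, h3⟩ | ⟨h1, h2, h3⟩) | (⟨_, h2, h3⟩ | ⟨h1, h2, h3⟩)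
  · exact ⟨h2, h3⟩
  · exact ⟨h1 ▸ huv.ne, h2⟩
  · exact ⟨h3, h2⟩
  · exact ⟨h2, h1 ▸ huv.ne⟩

end BC

set_option linter.unusedSectionVars false

private lemma key_mem {V : Type*} [DecidableEq V] [Fintype V] {G : SimpleGraph V} {u v : V}
    (huv : G.Adj u v) (hn4 : Fintype.card V = 4)
    (η : Sym2 V → ℕ) {f' g' FA FB : Sym2 V}
    (hne : f' ≠ g') (hfd : ¬ f'.IsDiag) (hgd : ¬ g'.IsDiag)
    (hFA : FA ∈ G.edgeSet) (hFB : FB ∈ G.edgeSet)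
    (hCA : cmap u v FA = f') (hCB : cmap u v FB = g')
    (hminA : ∀ h ∈ G.edgeSet, cmap u v h = f' → η FA ≤ η h)
    (hminB : ∀ h ∈ G.edgeSet, cmap u v h = g' → η FB ≤ η h)
    (hP : ∀ h ∈ G.edgeSet, h ≠ s(u, v) → cmap u v h ≠ f' → cmap u v h ≠ g' →
      ¬(η h < η FA ∧ η h < η FB)) :
    ({s(u, v), FA, FB} : Finset (Sym2 V)) ∈ NBset G η 3 := by
  have hAe : FA ≠ s(u, v) := by
    intro h; rw [h, cmap_e] at hCA; exact hfd (hCA ▸ Sym2.mk_isDiag_iff.mpr rfl)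
  have hBe : FB ≠ s(u, v) := by
    intro h; rw [h, cmap_e] at hCB; exact hgd (hCB ▸ Sym2.mk_isDiag_iff.mpr rfl)
  have hAB : FA ≠ FB := by
    intro h; exact hne (hCA ▸ hCB ▸ h ▸ rfl)
  have hcard : ({s(u, v), FA, FB} : Finset (Sym2 V)).card = 3 := by
    rw [Finset.card_insert_of_notMem (by
      simp only [Finset.mem_insert, Finset.mem_singleton]
      push_neg; exact ⟨Ne.symm hAe, Ne.symm hBe⟩),
      Finset.card_insert_of_notMem (by simpa using hAB), Finset.card_singleton]
  refine ⟨?_, hcard, ?_⟩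
  · intro f hf
    simp only [Finset.coe_insert, Finset.coe_singleton, Set.mem_insert_iff,
      Set.mem_singleton_iff] at hf
    rcases hf with rfl | rfl | rfl
    · exact huv
    · exact hFA
    · exact hFB
  intro B hBC hsub
  obtain ⟨u₀, w₀, p, hpath, hlen, hadj, hmax, hBeq⟩ := hBC
  have hnodup := hpath.isTrail.edges_nodup
  have hlenlt : p.length < 4 := hn4 ▸ hpath.length_lt
  have hBcard : B.card = p.length := by
    rw [hBeq, List.toFinset_card_of_nodup hnodup, SimpleGraph.Walk.length_edges]
  have hedmem : ∀ f ∈ p.edges, f ∈ ({s(u, v), FA, FB} : Finset (Sym2 V)) :=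
    fun f hf => hsub (hBeq ▸ List.mem_toFinset.mpr hf)
  have hh0 : s(u₀, w₀) ∈ G.edgeSet := hadj
  obtain h2 | h3 : p.length = 2 ∨ p.length = 3 := by omega
  · -- length two
    cases p with
    | nil => simp at h2
    | cons h₁ q =>
      rename_i x
      cases q with
      | nil => simp at h2
      | cons h₂ r =>
        rename_i y
        have hr0 : r.length = 0 := by
          simp only [SimpleGraph.Walk.length_cons] at h2; omega
        cases r with
        | cons _ _ => simp at hr0
        | nil =>
          clear hr0 h2
          have hedges : (SimpleGraph.Walk.cons h₁ (SimpleGraph.Walk.cons h₂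
              SimpleGraph.Walk.nil)).edges = [s(u₀, x), s(x, w₀)] := by
            simp [SimpleGraph.Walk.edges]
          have hm1 : s(u₀, x) ∈ ({s(u, v), FA, FB} : Finset (Sym2 V)) :=
            hedmem _ (by rw [hedges]; simp)
          have hm2 : s(x, w₀) ∈ ({s(u, v), FA, FB} : Finset (Sym2 V)) :=
            hedmem _ (by rw [hedges]; simp)
          have hlt1 : η s(u₀, w₀) < η s(u₀, x) := hmax _ (by rw [hedges]; simp)
          have hlt2 : η s(u₀, w₀) < η s(x, w₀) := hmax _ (by rw [hedges]; simp)
          have hne12 : s(u₀, x) ≠ s(x, w₀) := by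
            rw [hedges] at hnodup; simpa using hnodup
          simp only [Finset.mem_insert, Finset.mem_singleton] at hm1 hm2
          -- helper: edge equal to e forces both projections to u
          have proj : ∀ a b : V, s(a, b) = s(u, v) →
              (if a = v then u else a) = u ∧ (if b = v then u else b) = u := by
            intro a b hab
            rcases Sym2.eq_iff.mp hab with ⟨rfl, rfl⟩ | ⟨rfl, rfl⟩
            · constructor <;> simp
            · constructor <;> simp
          rcases hm1 with h | h | h <;> rcases hm2 with h' | h' | h'
          · exact hne12 (h.trans h'.symm)
          · -- E₁ = e, E₂ = FA
            have hp := proj _ _ h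
            have hkey : cmap u v s(u₀, w₀) = f' := by
              rw [← hCA, ← h', cmap_pair, cmap_pair, hp.1, hp.2]
            have := hminA _ hh0 hkey
            rw [h'] at hlt2; omega
          · -- E₁ = e, E₂ = FB
            have hp := proj _ _ h
            have hkey : cmap u v s(u₀, w₀) = g' := by
              rw [← hCB, ← h', cmap_pair, cmap_pair, hp.1, hp.2]
            have := hminB _ hh0 hkey
            rw [h'] at hlt2; omega
          · -- E₁ = FA, E₂ = e
            have hp := proj _ _ h'
            have hkey : cmap u v s(u₀, w₀) = f' := by
              rw [← hCA, ← h, cmap_pair, cmap_pair, hp.1, hp.2]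
            have := hminA _ hh0 hkey
            rw [h] at hlt1; omega
          · exact hne12 (h.trans h'.symm)
          · -- E₁ = FA, E₂ = FB
            by_cases hq : s(u₀, w₀) = s(u, v)
            · have hp := proj _ _ hq
              refine hne ?_
              rw [← hCA, ← hCB, ← h, ← h', cmap_pair, cmap_pair, hp.1, hp.2]
              exact Sym2.eq_swap
            · by_cases hc1 : cmap u v s(u₀, w₀) = f'
              · have := hminA _ hh0 hc1; rw [h] at hlt1; omega
              by_cases hc2 : cmap u v s(u₀, w₀) = g'
              · have := hminB _ hh0 hc2; rw [h'] at hlt2; omega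
              exact hP _ hh0 hq hc1 hc2 ⟨h ▸ hlt1, h' ▸ hlt2⟩
          · -- E₁ = FB, E₂ = e
            have hp := proj _ _ h'
            have hkey : cmap u v s(u₀, w₀) = g' := by
              rw [← hCB, ← h, cmap_pair, cmap_pair, hp.1, hp.2]
            have := hminB _ hh0 hkey
            rw [h] at hlt1; omega
          · -- E₁ = FB, E₂ = FA
            by_cases hq : s(u₀, w₀) = s(u, v)
            · have hp := proj _ _ hq
              refine hne ?_
              rw [← hCA, ← hCB, ← h, ← h', cmap_pair, cmap_pair, hp.1, hp.2]
              exact Sym2.eq_swap.symm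
            · by_cases hc1 : cmap u v s(u₀, w₀) = f'
              · have := hminA _ hh0 hc1; rw [h'] at hlt2; omega
              by_cases hc2 : cmap u v s(u₀, w₀) = g'
              · have := hminB _ hh0 hc2; rw [h] at hlt1; omega
              exact hP _ hh0 hq hc1 hc2 ⟨h' ▸ hlt2, h ▸ hlt1⟩
          · exact hne12 (h.trans h'.symm)
  · -- length three: B equals the whole set
    have hBA : B = ({s(u, v), FA, FB} : Finset (Sym2 V)) :=
      Finset.eq_of_subset_of_card_le hsub (by omega)
    have hall : ∀ f ∈ ({s(u, v), FA, FB} : Finset (Sym2 V)), η s(u₀, w₀) < η f := by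
      intro f hf
      exact hmax _ (List.mem_toFinset.mp (hBeq ▸ hBA ▸ hf))
    have hlte : η s(u₀, w₀) < η s(u, v) := hall _ (by simp)
    have hltA : η s(u₀, w₀) < η FA := hall _ (by simp)
    have hltB : η s(u₀, w₀) < η FB := hall _ (by simp)
    have hne_e : s(u₀, w₀) ≠ s(u, v) := by intro h; rw [h] at hlte; omega
    by_cases hc1 : cmap u v s(u₀, w₀) = f'
    · have := hminA _ hh0 hc1; omega
    by_cases hc2 : cmap u v s(u₀, w₀) = g'
    · have := hminB _ hh0 hc2; omega
    exact hP _ hh0 hne_e hc1 hc2 ⟨hltA, hltB⟩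

private lemma min_lift {V : Type*} [DecidableEq V] [Fintype V] {G : SimpleGraph V}
    [DecidableRel G.Adj] {u v : V} (η : Sym2 V → ℕ) {f' : Sym2 V}
    (hf : f' ∈ (contractE G u v).edgeSet) :
    ∃ F ∈ G.edgeSet, cmap u v F = f' ∧ ∀ h ∈ G.edgeSet, cmap u v h = f' → η F ≤ η h := by
  obtain ⟨g, hg, hcg⟩ := exists_lift hf
  have hs : (G.edgeFinset.filter (fun h => cmap u v h = f')).Nonempty :=
    ⟨g, Finset.mem_filter.mpr ⟨SimpleGraph.mem_edgeFinset.mpr hg, hcg⟩⟩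
  obtain ⟨F, hFmem, hFmin⟩ := Finset.exists_min_image _ η hs
  rw [Finset.mem_filter, SimpleGraph.mem_edgeFinset] at hFmem
  exact ⟨F, hFmem.1, hFmem.2, fun h hh hch =>
    hFmin h (Finset.mem_filter.mpr ⟨SimpleGraph.mem_edgeFinset.mpr hh, hch⟩)⟩

private lemma two_le_core {V : Type*} [DecidableEq V] [Fintype V] {G : SimpleGraph V}
    {u v : V} (huv : G.Adj u v) (hn4 : Fintype.card V = 4) (η : Sym2 V → ℕ)
    {a' b' c' : Sym2 V} (hab : a' ≠ b') (hac : a' ≠ c') (hbc : b' ≠ c')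
    (hE : (contractE G u v).edgeSet = {a', b', c'})
    {Fa Fb Fc : Sym2 V}
    (hFa : Fa ∈ G.edgeSet) (hCa : cmap u v Fa = a')
    (hma : ∀ h ∈ G.edgeSet, cmap u v h = a' → η Fa ≤ η h)
    (hFb : Fb ∈ G.edgeSet) (hCb : cmap u v Fb = b')
    (hmb : ∀ h ∈ G.edgeSet, cmap u v h = b' → η Fb ≤ η h)
    (hFc : Fc ∈ G.edgeSet) (hCc : cmap u v Fc = c')
    (hmc : ∀ h ∈ G.edgeSet, cmap u v h = c' → η Fc ≤ η h)
    (h1 : η Fa ≤ η Fb) (h2 : η Fa ≤ η Fc) :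
    2 ≤ NBe G η 3 s(u, v) := by
  have hda : ¬ a'.IsDiag :=
    (contractE G u v).not_isDiag_of_mem_edgeSet (by rw [hE]; simp)
  have hdb : ¬ b'.IsDiag :=
    (contractE G u v).not_isDiag_of_mem_edgeSet (by rw [hE]; simp)
  have hdc : ¬ c'.IsDiag :=
    (contractE G u v).not_isDiag_of_mem_edgeSet (by rw [hE]; simp)
  have hP1 : ∀ h ∈ G.edgeSet, h ≠ s(u, v) → cmap u v h ≠ a' → cmap u v h ≠ b' →
      ¬(η h < η Fa ∧ η h < η Fb) := by
    rintro h hh hhe hc1 hc2 ⟨l1, l2⟩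
    have hm : cmap u v h ∈ ({a', b', c'} : Set (Sym2 V)) :=
      hE ▸ cmap_mem_edgeSet huv hh hhe
    simp only [Set.mem_insert_iff, Set.mem_singleton_iff] at hm
    rcases hm with hm | hm | hm
    · exact hc1 hm
    · exact hc2 hm
    · have := hmc h hh hm; omega
  have hP2 : ∀ h ∈ G.edgeSet, h ≠ s(u, v) → cmap u v h ≠ a' → cmap u v h ≠ c' →
      ¬(η h < η Fa ∧ η h < η Fc) := by
    rintro h hh hhe hc1 hc2 ⟨l1, l2⟩
    have hm : cmap u v h ∈ ({a', b', c'} : Set (Sym2 V)) :=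
      hE ▸ cmap_mem_edgeSet huv hh hhe
    simp only [Set.mem_insert_iff, Set.mem_singleton_iff] at hm
    rcases hm with hm | hm | hm
    · exact hc1 hm
    · have := hmb h hh hm; omega
    · exact hc2 hm
  have hk1 := key_mem huv hn4 η hab hda hdb hFa hFb hCa hCb hma hmb hP1
  have hk2 := key_mem huv hn4 η hac hda hdc hFa hFc hCa hCc hma hmc hP2
  have hbe : Fb ≠ s(u, v) := by
    intro h; rw [h, cmap_e] at hCb; exact hdb (hCb ▸ Sym2.mk_isDiag_iff.mpr rfl)
  have hba : Fb ≠ Fa := fun h => hab (by rw [← hCa, ← hCb, h])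
  have hbc' : Fb ≠ Fc := fun h => hbc (by rw [← hCb, ← hCc, h])
  have hne12 : ({s(u, v), Fa, Fb} : Finset (Sym2 V)) ≠ {s(u, v), Fa, Fc} := by
    intro h
    have hmem : Fb ∈ ({s(u, v), Fa, Fc} : Finset (Sym2 V)) := h ▸ (by simp)
    simp only [Finset.mem_insert, Finset.mem_singleton] at hmem
    rcases hmem with h' | h' | h'
    · exact hbe h'
    · exact hba h'
    · exact hbc' h'
  rw [NBe]
  have hlt : 1 < ({A : Finset (Sym2 V) | A ∈ NBset G η 3 ∧ s(u, v) ∈ A}).ncard := by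
    rw [Set.one_lt_ncard (Set.toFinite _)]
    refine ⟨({s(u, v), Fa, Fb} : Finset (Sym2 V)), ⟨hk1, by simp⟩,
      ({s(u, v), Fa, Fc} : Finset (Sym2 V)), ⟨hk2, by simp⟩, hne12⟩
  omega

set_option maxHeartbeats 1000000 in
private lemma big {V : Type*} [Fintype V] [DecidableEq V] (G : SimpleGraph V)
    [DecidableRel G.Adj] (hn4 : Fintype.card V = 4) (η : Sym2 V → ℕ)
    {u v : V} (huv : G.Adj u v) :
    NB2 (contractE G u v) ≤ NBe G η 3 s(u, v) := by
  have hu_mem : u ∈ Finset.univ.erase v := Finset.mem_erase.mpr ⟨huv.ne, Finset.mem_univ u⟩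
  have hc2 : ((Finset.univ.erase v).erase u).card = 2 := by
    rw [Finset.card_erase_of_mem hu_mem, Finset.card_erase_of_mem (Finset.mem_univ v),
      Finset.card_univ, hn4]
  obtain ⟨p, q, hpq, hset⟩ := Finset.card_eq_two.mp hc2
  have hp : p ∈ (Finset.univ.erase v).erase u := hset ▸ (by simp)
  have hq : q ∈ (Finset.univ.erase v).erase u := hset ▸ (by simp)
  have hpu : p ≠ u := (Finset.mem_erase.mp hp).1
  have hpv : p ≠ v := (Finset.mem_erase.mp (Finset.mem_erase.mp hp).2).1
  have hqu : q ≠ u := (Finset.mem_erase.mp hq).1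
  have hqv : q ≠ v := (Finset.mem_erase.mp (Finset.mem_erase.mp hq).2).1
  have hcov : ∀ z : V, z ≠ u → z ≠ v → z = p ∨ z = q := by
    intro z h1 h2
    have hz : z ∈ (Finset.univ.erase v).erase u := by simp [Finset.mem_erase, h1, h2]
    rw [hset] at hz; simpa using hz
  have hslots : (contractE G u v).edgeSet ⊆
      ({s(u, p), s(u, q), s(p, q)} : Set (Sym2 V)) := by
    intro f
    induction f using Sym2.ind with
    | _ x y =>
      intro hf
      have hadj := ((contractE G u v).mem_edgeSet).mp hf
      have hnv := contract_ne_v huv hadj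
      have hxy := hadj.ne
      have hx3 : x = u ∨ x = p ∨ x = q := by
        by_cases h : x = u
        · exact Or.inl h
        · exact Or.inr (hcov x h hnv.1)
      have hy3 : y = u ∨ y = p ∨ y = q := by
        by_cases h : y = u
        · exact Or.inl h
        · exact Or.inr (hcov y h hnv.2)
      rcases hx3 with rfl | rfl | rfl <;> rcases hy3 with rfl | rfl | rfl <;>
        simp_all [Set.mem_insert_iff, Set.mem_singleton_iff, Sym2.eq_iff]
  have hslots_card : ({s(u, p), s(u, q), s(p, q)} : Set (Sym2 V)).ncard ≤ 3 := by
    have hcoe : ({s(u, p), s(u, q), s(p, q)} : Set (Sym2 V)) =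
        ↑({s(u, p), s(u, q), s(p, q)} : Finset (Sym2 V)) := by simp
    rw [hcoe, Set.ncard_coe_finset]
    have t1 := Finset.card_insert_le s(u, p) ({s(u, q), s(p, q)} : Finset (Sym2 V))
    have t2 := Finset.card_insert_le s(u, q) ({s(p, q)} : Finset (Sym2 V))
    have t3 : ({s(p, q)} : Finset (Sym2 V)).card = 1 := Finset.card_singleton _
    omega
  have hm3 : (contractE G u v).edgeSet.ncard ≤ 3 :=
    le_trans (Set.ncard_le_ncard hslots (Set.toFinite _)) hslots_card
  obtain h0 | h1 | h2 | h3 : (contractE G u v).edgeSet.ncard = 0 ∨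
      (contractE G u v).edgeSet.ncard = 1 ∨ (contractE G u v).edgeSet.ncard = 2 ∨
      (contractE G u v).edgeSet.ncard = 3 := by omega
  · rw [NB2, h0]
    have : Nat.choose 0 2 = 0 := rfl
    omega
  · rw [NB2, h1]
    have : Nat.choose 1 2 = 0 := rfl
    omega
  · obtain ⟨f', g', hfg, hE⟩ := Set.ncard_eq_two.mp h2
    have hf' : f' ∈ (contractE G u v).edgeSet := by rw [hE]; simp
    have hg' : g' ∈ (contractE G u v).edgeSet := by rw [hE]; simp
    obtain ⟨FA, hFA, hCA, hminA⟩ := min_lift η hf'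
    obtain ⟨FB, hFB, hCB, hminB⟩ := min_lift η hg'
    have hP : ∀ h ∈ G.edgeSet, h ≠ s(u, v) → cmap u v h ≠ f' → cmap u v h ≠ g' →
        ¬(η h < η FA ∧ η h < η FB) := by
      rintro h hh hhe hc1 hc2 -
      have hm : cmap u v h ∈ ({f', g'} : Set (Sym2 V)) :=
        hE ▸ cmap_mem_edgeSet huv hh hhe
      simp only [Set.mem_insert_iff, Set.mem_singleton_iff] at hm
      rcases hm with hm | hm
      · exact hc1 hm
      · exact hc2 hm
    have hk := key_mem huv hn4 η hfg
      ((contractE G u v).not_isDiag_of_mem_edgeSet hf')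
      ((contractE G u v).not_isDiag_of_mem_edgeSet hg')
      hFA hFB hCA hCB hminA hminB hP
    have hpos : 0 < NBe G η 3 s(u, v) := by
      rw [NBe]
      exact (Set.ncard_pos (Set.toFinite _)).mpr
        ⟨({s(u, v), FA, FB} : Finset (Sym2 V)), hk, by simp⟩
    rw [NB2, h2]
    have : Nat.choose 2 2 = 1 := rfl
    omega
  · obtain ⟨a', b', c', hab, hac, hbc, hE⟩ := Set.ncard_eq_three.mp h3
    have ha' : a' ∈ (contractE G u v).edgeSet := by rw [hE]; simp
    have hb' : b' ∈ (contractE G u v).edgeSet := by rw [hE]; simp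
    have hc' : c' ∈ (contractE G u v).edgeSet := by rw [hE]; simp
    obtain ⟨Fa, hFa, hCa, hma⟩ := min_lift η ha'
    obtain ⟨Fb, hFb, hCb, hmb⟩ := min_lift η hb'
    obtain ⟨Fc, hFc, hCc, hmc⟩ := min_lift η hc'
    -- triangle exists
    have hEq : (contractE G u v).edgeSet = ({s(u, p), s(u, q), s(p, q)} : Set (Sym2 V)) :=
      Set.eq_of_subset_of_ncard_le hslots (by rw [h3]; exact hslots_card) (Set.toFinite _)
    have hup : (contractE G u v).Adj u p :=
      ((contractE G u v).mem_edgeSet).mp (by rw [hEq]; simp)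
    have huq : (contractE G u v).Adj u q :=
      ((contractE G u v).mem_edgeSet).mp (by rw [hEq]; simp)
    have hpq2 : (contractE G u v).Adj p q :=
      ((contractE G u v).mem_edgeSet).mp (by rw [hEq]; simp)
    have hclique : (contractE G u v).IsNClique 3 ({u, p, q} : Finset V) := by
      rw [SimpleGraph.isNClique_iff]
      constructor
      · intro a ha b hb hne
        simp only [Finset.coe_insert, Finset.coe_singleton, Set.mem_insert_iff,
          Set.mem_singleton_iff] at ha hb
        rcases ha with rfl | rfl | rfl <;> rcases hb with rfl | rfl | rfl
        · exact absurd rfl hne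
        · exact hup
        · exact huq
        · exact hup.symm
        · exact absurd rfl hne
        · exact hpq2
        · exact huq.symm
        · exact hpq2.symm
        · exact absurd rfl hne
      · exact Finset.card_eq_three.mpr ⟨u, p, q, Ne.symm hpu, Ne.symm hqu, hpq, rfl⟩
    have ht : 0 < triangleCount (contractE G u v) := by
      rw [triangleCount]
      exact (Set.ncard_pos (Set.toFinite _)).mpr ⟨({u, p, q} : Finset V), hclique⟩
    have h2le : 2 ≤ NBe G η 3 s(u, v) := by
      by_cases m1 : η Fa ≤ η Fb ∧ η Fa ≤ η Fc
      · exact two_le_core huv hn4 η hab hac hbc hE hFa hCa hma hFb hCb hmb hFc hCc hmc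
          m1.1 m1.2
      · by_cases m2 : η Fb ≤ η Fa ∧ η Fb ≤ η Fc
        · have hE' : (contractE G u v).edgeSet = ({b', a', c'} : Set (Sym2 V)) := by
            rw [hE]; ext z; simp only [Set.mem_insert_iff, Set.mem_singleton_iff]; tauto
          exact two_le_core huv hn4 η (Ne.symm hab) hbc hac hE' hFb hCb hmb hFa hCa hma
            hFc hCc hmc m2.1 m2.2
        · have m3 : η Fc ≤ η Fa ∧ η Fc ≤ η Fb := by push_neg at m1 m2; omega
          have hE' : (contractE G u v).edgeSet = ({c', a', b'} : Set (Sym2 V)) := by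
            rw [hE]; ext z; simp only [Set.mem_insert_iff, Set.mem_singleton_iff]; tauto
          exact two_le_core huv hn4 η (Ne.symm hac) (Ne.symm hbc) hab hE' hFc hCc hmc
            hFa hCa hma hFb hCb hmb m3.1 m3.2
    rw [NB2, h3]
    have : Nat.choose 3 2 = 3 := rfl
    omega

theorem stmt10 [Fintype V] [DecidableEq V] (G : SimpleGraph V) [DecidableRel G.Adj]
    (m : ℕ) (hm : m = G.edgeFinset.card) (hn4 : Fintype.card V = 4)
    (η : Sym2 V → ℕ) (hη : Set.BijOn η G.edgeSet (Set.Icc 1 m))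
    (u v : V) (huv : G.Adj u v) (x : ℝ) (hx : (m : ℝ) - 1 ≤ x) :
    Qeta G η s(u, v) x ≥ (NB2 (contractE G u v) : ℝ) / 3 * x := by
  have he : s(u, v) ∈ G.edgeSet := huv
  have hef : s(u, v) ∈ G.edgeFinset := SimpleGraph.mem_edgeFinset.mpr he
  have hm1 : 1 ≤ m := by rw [hm]; exact Finset.card_pos.mpr ⟨_, hef⟩
  have hx0 : (0 : ℝ) ≤ x := by
    have : (1 : ℝ) ≤ (m : ℝ) := by exact_mod_cast hm1
    linarith
  -- NBe 1 equals 1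
  have h1 : NBe G η 1 s(u, v) = 1 := by
    rw [NBe]
    have hset : {A : Finset (Sym2 V) | A ∈ NBset G η 1 ∧ s(u, v) ∈ A} =
        {({s(u, v)} : Finset (Sym2 V))} := by
      ext A
      simp only [Set.mem_setOf_eq, Set.mem_singleton_iff]
      constructor
      · rintro ⟨⟨hsubE, hcard, hBC⟩, hmem⟩
        obtain ⟨a, hA⟩ := Finset.card_eq_one.mp hcard
        rw [hA] at hmem ⊢
        rw [Finset.mem_singleton] at hmem
        rw [hmem]
      · rintro rfl
        refine ⟨⟨?_, Finset.card_singleton _, ?_⟩, Finset.mem_singleton_self _⟩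
        · intro f hf
          simp only [Finset.coe_singleton, Set.mem_singleton_iff] at hf
          rw [hf]; exact he
        · intro B hBC hsub
          obtain ⟨u₀, w₀, p, hpath, hlen, -, -, hBeq⟩ := hBC
          have hBcard : B.card = p.length := by
            rw [hBeq, List.toFinset_card_of_nodup hpath.isTrail.edges_nodup,
              SimpleGraph.Walk.length_edges]
          have := Finset.card_le_card hsub
          simp only [Finset.card_singleton] at this
          omega
    rw [hset, Set.ncard_singleton]
  -- NBe 2 is at most m - 1
  have h2n : NBe G η 2 s(u, v) ≤ m - 1 := by
    rw [NBe]
    have hsub2 : {A : Finset (Sym2 V) | A ∈ NBset G η 2 ∧ s(u, v) ∈ A} ⊆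
        (fun g => ({s(u, v), g} : Finset (Sym2 V))) '' ↑(G.edgeFinset.erase s(u, v)) := by
      rintro A ⟨⟨hsubE, hcard, -⟩, hmem⟩
      obtain ⟨a, b, hab, hA⟩ := Finset.card_eq_two.mp hcard
      rw [hA, Finset.mem_insert, Finset.mem_singleton] at hmem
      rcases hmem with rfl | rfl
      · refine ⟨b, ?_, by rw [hA]⟩
        refine Finset.mem_coe.mpr (Finset.mem_erase.mpr ⟨Ne.symm hab, ?_⟩)
        exact SimpleGraph.mem_edgeFinset.mpr (hsubE (by rw [hA]; simp))
      · refine ⟨a, ?_, ?_⟩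
        · refine Finset.mem_coe.mpr (Finset.mem_erase.mpr ⟨hab, ?_⟩)
          exact SimpleGraph.mem_edgeFinset.mpr (hsubE (by rw [hA]; simp))
        · rw [hA, Finset.pair_comm]
    calc {A : Finset (Sym2 V) | A ∈ NBset G η 2 ∧ s(u, v) ∈ A}.ncard
        ≤ ((fun g => ({s(u, v), g} : Finset (Sym2 V))) ''
            ↑(G.edgeFinset.erase s(u, v))).ncard :=
          Set.ncard_le_ncard hsub2 (Set.toFinite _)
      _ ≤ (↑(G.edgeFinset.erase s(u, v)) : Set (Sym2 V)).ncard :=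
          Set.ncard_image_le (Set.toFinite _)
      _ = (G.edgeFinset.erase s(u, v)).card := Set.ncard_coe_finset _
      _ = m - 1 := by rw [Finset.card_erase_of_mem hef, hm]
  have h2 : (NBe G η 2 s(u, v) : ℝ) ≤ x := by
    have hcast : ((m - 1 : ℕ) : ℝ) = (m : ℝ) - 1 := by
      rw [Nat.cast_sub hm1]; simp
    have : ((NBe G η 2 s(u, v) : ℕ) : ℝ) ≤ ((m - 1 : ℕ) : ℝ) := by exact_mod_cast h2n
    linarith [hcast ▸ this]
  have h3 : (NB2 (contractE G u v) : ℝ) ≤ (NBe G η 3 s(u, v) : ℝ) := by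
    exact_mod_cast big G hn4 η huv
  have hf1 : (Finset.Icc 1 3).filter (fun i => Odd i) = {1, 3} := by decide
  have hf2 : (Finset.Icc 2 3).filter (fun i => Even i) = {2} := by decide
  have hQ : Qeta G η s(u, v) x = (NBe G η 1 s(u, v) : ℝ) / 1 * x ^ 3 +
      (NBe G η 3 s(u, v) : ℝ) / 3 * x ^ 1 - (NBe G η 2 s(u, v) : ℝ) * x ^ 2 := by
    simp only [Qeta, hn4]
    norm_num [hf1, hf2, Finset.sum_pair (by norm_num : (1 : ℕ) ≠ 3)]
  rw [ge_iff_le, hQ, h1]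
  have t1 : 0 ≤ x ^ 2 * (x - (NBe G η 2 s(u, v) : ℝ)) :=
    mul_nonneg (sq_nonneg x) (by linarith)
  have t2 : 0 ≤ ((NBe G η 3 s(u, v) : ℝ) - (NB2 (contractE G u v) : ℝ)) * x :=
    mul_nonneg (by linarith) hx0
  nlinarith [t1, t2]
end

section
/- Let G be a K₃-free (triangle-free) simple graph with m ≥ 1 edges. Then every edge of G is contained in at most (√m − 1)² 4-cycles of G; that is, c₄(G) ≤ (√m − 1)², where √m is the real square root. -/
open Finset

variable {V : Type*}

/-!
For an edge `uv`, every 4-cycle through `uv` has the form `u v x y` with `x ∈ N(v) \ {u}`,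
`y ∈ N(u) \ {v}` and `x ~ y`, so the number of such cycles is at most the number `t` of these
pairs, and `t ≤ a b` with `a = deg v - 1`, `b = deg u - 1`. In a triangle-free graph the `t` edges
`xy` are pairwise distinct and meet neither `u` nor `v`, so `a + b + 1 + t ≤ m`. Maximising `t`
under these two constraints gives `t ≤ (√m - 1)²`.
-/

theorem le_sqrt_sub_one_sq_of_add_le {a b t M : ℝ} (ha : 0 ≤ a) (hb : 0 ≤ b) (ht : t ≤ a * b)
    (hM : a + b + 1 + t ≤ M) : t ≤ (√M - 1) ^ 2 := by
  rcases lt_or_ge M 0 with hM0 | hM0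
  · nlinarith [sq_nonneg (√M - 1)]
  have hsq : √M ^ 2 = M := Real.sq_sqrt hM0
  -- if `a + b` is small use `t ≤ a b ≤ ((a + b) / 2) ^ 2`, otherwise `t ≤ M - 1 - (a + b)`
  rcases le_total (a + b) (2 * (√M - 1)) with hab | hab
  · nlinarith [sq_nonneg (a - b), mul_nonneg (sub_nonneg.2 hab) (add_nonneg ha hb)]
  · nlinarith

namespace SimpleGraph

variable {G : SimpleGraph V} {a b c d u v x y : V}

def IsQuadrilateral (G : SimpleGraph V) (a b c d : V) : Prop :=
  G.Adj a b ∧ G.Adj b c ∧ G.Adj c d ∧ G.Adj d a ∧ a ≠ c ∧ b ≠ d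

theorem IsQuadrilateral.rotate (h : G.IsQuadrilateral a b c d) : G.IsQuadrilateral b c d a :=
  let ⟨hab, hbc, hcd, hda, hac, hbd⟩ := h
  ⟨hbc, hcd, hda, hab, hbd, hac.symm⟩

theorem IsQuadrilateral.reverse (h : G.IsQuadrilateral a b c d) : G.IsQuadrilateral b a d c :=
  let ⟨hab, hbc, hcd, hda, hac, hbd⟩ := h
  ⟨hab.symm, hda.symm, hcd.symm, hbc.symm, hbd, hac⟩

section Edges

variable [DecidableEq V]

def quadEdges (a b c d : V) : Finset (Sym2 V) := {s(a, b), s(b, c), s(c, d), s(d, a)}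

theorem quadEdges_rotate (a b c d : V) : quadEdges a b c d = quadEdges b c d a := by
  ext; simp only [quadEdges, mem_insert, mem_singleton]; tauto

theorem quadEdges_reverse (a b c d : V) : quadEdges a b c d = quadEdges b a d c := by
  ext; simp only [quadEdges, mem_insert, mem_singleton, Sym2.eq_swap]; tauto

theorem IsQuadrilateral.exists_of_mk_eq (h : G.IsQuadrilateral a b c d) (huv : s(u, v) = s(a, b)) :
    ∃ x y, G.IsQuadrilateral u v x y ∧ quadEdges a b c d = quadEdges u v x y := by
  rcases Sym2.eq_iff.1 huv with ⟨rfl, rfl⟩ | ⟨rfl, rfl⟩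
  · exact ⟨c, d, h, rfl⟩
  · exact ⟨d, c, h.reverse, quadEdges_reverse ..⟩

theorem IsQuadrilateral.exists_of_mem (h : G.IsQuadrilateral a b c d)
    (huv : s(u, v) ∈ quadEdges a b c d) :
    ∃ x y, G.IsQuadrilateral u v x y ∧ quadEdges a b c d = quadEdges u v x y := by
  simp only [quadEdges, mem_insert, mem_singleton] at huv
  rcases huv with huv | huv | huv | huv
  · exact h.exists_of_mk_eq huv
  · rw [quadEdges_rotate]
    exact h.rotate.exists_of_mk_eq huv
  · rw [quadEdges_rotate, quadEdges_rotate]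
    exact h.rotate.rotate.exists_of_mk_eq huv
  · rw [quadEdges_rotate, quadEdges_rotate, quadEdges_rotate]
    exact h.rotate.rotate.rotate.exists_of_mk_eq huv

end Edges

end SimpleGraph

open SimpleGraph

theorem IsFourCycle.exists_isQuadrilateral [DecidableEq V] {G : SimpleGraph V}
    {C : Finset (Sym2 V)} (hC : IsFourCycle G C) :
    ∃ a b c d, G.IsQuadrilateral a b c d ∧ C = quadEdges a b c d := by
  obtain ⟨a, p, hp, hlen, rfl⟩ := hC
  match p, hlen, hp with
  | .cons (v := b) hab (.cons (v := c) hbc (.cons (v := d) hcd (.cons hda .nil))), _, hp =>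
    have hnd := hp.support_nodup
    simp only [Walk.support_cons, Walk.support_nil, List.tail_cons, List.nodup_cons, List.mem_cons,
      List.not_mem_nil, or_false, not_or, not_false_eq_true, List.nodup_nil, and_self, and_true] at hnd
    obtain ⟨⟨-, hbd, -⟩, ⟨-, hca⟩, -⟩ := hnd
    exact ⟨a, b, c, d, ⟨hab, hbc, hcd, hda, Ne.symm hca, hbd⟩, by simp [quadEdges]⟩

theorem IsFourCycle.exists_of_mem [DecidableEq V] {G : SimpleGraph V} {C : Finset (Sym2 V)}
    {u v : V} (hC : IsFourCycle G C) (huv : s(u, v) ∈ C) :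
    ∃ x y, G.IsQuadrilateral u v x y ∧ C = quadEdges u v x y := by
  obtain ⟨a, b, c, d, h, rfl⟩ := hC.exists_isQuadrilateral
  exact h.exists_of_mem huv

namespace SimpleGraph

variable [Fintype V] [DecidableEq V] {G : SimpleGraph V} [DecidableRel G.Adj] {u v x y : V}

/-- The pairs `(x, y)` for which `u v x y` is a 4-cycle, given that `u` and `v` are adjacent. -/
def quadCompletions (G : SimpleGraph V) [DecidableRel G.Adj] (u v : V) : Finset (V × V) :=
  {p ∈ (G.neighborFinset v).erase u ×ˢ (G.neighborFinset u).erase v | G.Adj p.1 p.2}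

theorem mem_quadCompletions {p : V × V} :
    p ∈ G.quadCompletions u v ↔
      (p.1 ≠ u ∧ G.Adj v p.1) ∧ (p.2 ≠ v ∧ G.Adj u p.2) ∧ G.Adj p.1 p.2 := by
  simp [quadCompletions, and_assoc]

theorem IsQuadrilateral.mk_mem_quadCompletions (h : G.IsQuadrilateral u v x y) :
    (x, y) ∈ G.quadCompletions u v :=
  let ⟨_, hvx, hxy, hyu, hux, hvy⟩ := h
  mem_quadCompletions.2 ⟨⟨hux.symm, hvx⟩, ⟨hvy.symm, hyu.symm⟩, hxy⟩

theorem fourCyclesOn_le_card_quadCompletions (u v : V) :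
    fourCyclesOn G s(u, v) ≤ #(G.quadCompletions u v) := by
  have hsub : {C | IsFourCycle G C ∧ s(u, v) ∈ C} ⊆
      ↑((G.quadCompletions u v).image fun p => quadEdges u v p.1 p.2) := by
    rintro C ⟨hC, huv⟩
    obtain ⟨x, y, h, rfl⟩ := hC.exists_of_mem huv
    exact mem_image_of_mem _ h.mk_mem_quadCompletions
  calc fourCyclesOn G s(u, v) ≤ #((G.quadCompletions u v).image fun p => quadEdges u v p.1 p.2) :=
        (Set.ncard_le_ncard hsub (finite_toSet _)).trans_eq (Set.ncard_coe_finset _)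
    _ ≤ #(G.quadCompletions u v) := card_image_le

theorem card_quadCompletions_le (u v : V) :
    #(G.quadCompletions u v) ≤ #((G.neighborFinset v).erase u) * #((G.neighborFinset u).erase v) :=
  (card_filter_le _ _).trans_eq (card_product _ _)

theorem card_incidenceFinset_union_add_one (huv : G.Adj u v) :
    #(G.incidenceFinset u ∪ G.incidenceFinset v) + 1 = G.degree u + G.degree v := by
  have hinter : G.incidenceFinset u ∩ G.incidenceFinset v = {s(u, v)} := by
    apply coe_injective
    simp [coe_incidenceFinset, G.incidenceSet_inter_incidenceSet_of_adj huv]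
  rw [← card_incidenceFinset_eq_degree, ← card_incidenceFinset_eq_degree,
    ← card_union_add_card_inter, hinter, card_singleton]

theorem injOn_mk_quadCompletions (hG : G.CliqueFree 3) (huv : G.Adj u v) :
    Set.InjOn (fun p : V × V => s(p.1, p.2)) (G.quadCompletions u v) := by
  rintro ⟨x, y⟩ hxy ⟨x', y'⟩ hxy' h
  rcases Sym2.eq_iff.1 h with ⟨rfl, rfl⟩ | ⟨rfl, rfl⟩
  · rfl
  -- `(x, y)` and `(y, x)` both in the set would make `u v x` a triangle
  · obtain ⟨⟨hxu, hvx⟩, -, -⟩ := mem_quadCompletions.1 hxy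
    obtain ⟨-, ⟨-, hux⟩, -⟩ := mem_quadCompletions.1 hxy'
    exact absurd hux.symm (isIndepSet_neighborSet_of_triangleFree G hG v hvx huv.symm hxu)

theorem disjoint_incidenceFinset_image_quadCompletions :
    Disjoint (G.incidenceFinset u ∪ G.incidenceFinset v)
      ((G.quadCompletions u v).image fun p => s(p.1, p.2)) := by
  rw [Finset.disjoint_right]
  intro e he
  obtain ⟨⟨x, y⟩, hxy, rfl⟩ := mem_image.1 he
  obtain ⟨⟨hxu, hvx⟩, ⟨hyv, huy⟩, -⟩ := mem_quadCompletions.1 hxy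
  simp only [mem_union, mem_incidenceFinset, mk'_mem_incidenceSet_iff]
  exact fun h => h.elim (fun ⟨_, h⟩ => h.elim (hxu ∘ Eq.symm) huy.ne)
    fun ⟨_, h⟩ => h.elim hvx.ne (hyv ∘ Eq.symm)

theorem CliqueFree.card_erase_neighborFinset_add_card_quadCompletions_le (hG : G.CliqueFree 3)
    (huv : G.Adj u v) :
    #((G.neighborFinset v).erase u) + #((G.neighborFinset u).erase v) + 1 +
      #(G.quadCompletions u v) ≤ #G.edgeFinset := by
  have hsub : G.incidenceFinset u ∪ G.incidenceFinset v ∪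
      (G.quadCompletions u v).image (fun p => s(p.1, p.2)) ⊆ G.edgeFinset :=
    union_subset (union_subset (G.incidenceFinset_subset u) (G.incidenceFinset_subset v))
      (image_subset_iff.2 fun p hp => mem_edgeFinset.2 (mem_quadCompletions.1 hp).2.2)
  have hcard := card_le_card hsub
  rw [card_union_of_disjoint disjoint_incidenceFinset_image_quadCompletions,
    card_image_of_injOn (injOn_mk_quadCompletions hG huv)] at hcard
  have hunion := card_incidenceFinset_union_add_one huv
  rw [← card_neighborFinset_eq_degree, ← card_neighborFinset_eq_degree,
    ← card_erase_add_one ((G.mem_neighborFinset _ _).2 huv),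
    ← card_erase_add_one ((G.mem_neighborFinset _ _).2 huv.symm)] at hunion
  omega

theorem CliqueFree.fourCyclesOn_le_sqrt_sub_one_sq (hG : G.CliqueFree 3) (huv : G.Adj u v) :
    (fourCyclesOn G s(u, v) : ℝ) ≤ (√(#G.edgeFinset : ℝ) - 1) ^ 2 := by
  have hcycles := G.fourCyclesOn_le_card_quadCompletions u v
  have hpairs := G.card_quadCompletions_le u v
  have hedges := hG.card_erase_neighborFinset_add_card_quadCompletions_le huv
  refine (Nat.cast_le.2 hcycles).trans (le_sqrt_sub_one_sq_of_add_le (Nat.cast_nonneg _)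
    (Nat.cast_nonneg _) (by exact_mod_cast hpairs) (by exact_mod_cast hedges))

end SimpleGraph

theorem c4_le_of_forall_fourCyclesOn_le [Finite V] [DecidableEq V] {G : SimpleGraph V} {c : ℝ}
    (hc : 0 ≤ c) (h : ∀ e ∈ G.edgeSet, (fourCyclesOn G e : ℝ) ≤ c) : (c4 G : ℝ) ≤ c := by
  have hvalues : {r : ℕ | ∃ e ∈ G.edgeSet, r = fourCyclesOn G e} = fourCyclesOn G '' G.edgeSet := by
    ext; simp [eq_comm]
  rcases Set.eq_empty_or_nonempty (fourCyclesOn G '' G.edgeSet) with hempty | hne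
  · simp [c4, hvalues, hempty, hc]
  · obtain ⟨e, he, hce⟩ := Nat.sSup_mem hne (G.edgeSet.toFinite.image _).bddAbove
    rw [c4, hvalues, ← hce]
    exact h e he

theorem stmt12_general [Fintype V] [DecidableEq V] (G : SimpleGraph V) [DecidableRel G.Adj]
    (m : ℕ) (hm : m = G.edgeFinset.card) (hfree : G.CliqueFree 3) :
    (∀ e ∈ G.edgeSet, (fourCyclesOn G e : ℝ) ≤ (Real.sqrt m - 1) ^ 2) ∧
    (c4 G : ℝ) ≤ (Real.sqrt m - 1) ^ 2 := by
  subst hm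
  have hedge : ∀ e ∈ G.edgeSet, (fourCyclesOn G e : ℝ) ≤ (√(#G.edgeFinset : ℝ) - 1) ^ 2 := by
    intro e he
    induction e using Sym2.ind with
    | _ u v => exact hfree.fourCyclesOn_le_sqrt_sub_one_sq he
  exact ⟨hedge, c4_le_of_forall_fourCyclesOn_le (sq_nonneg _) hedge⟩

theorem stmt12 [Fintype V] [DecidableEq V] (G : SimpleGraph V) [DecidableRel G.Adj]
    (m : ℕ) (hm : m = G.edgeFinset.card) (hm1 : 1 ≤ m) (hfree : G.CliqueFree 3) :
    (∀ e ∈ G.edgeSet, (fourCyclesOn G e : ℝ) ≤ (Real.sqrt m - 1) ^ 2) ∧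
    (c4 G : ℝ) ≤ (Real.sqrt m - 1) ^ 2 :=
  stmt12_general G m hm hfree
end

section
/- Let H be a simple graph and let t be a nonnegative integer such that the maximum degree of H is at least t. Then the number of triangles of H satisfies △(H) ≤ ((|E(H)| − t)/6)·(3 + √(8(|E(H)| − t) + 1)), where the square root is the real square root. -/
open Finset

variable {V : Type*}

/-!
Deleting the edges at a vertex `x` of degree `d` destroys exactly the triangles through `x`.
Each of them is determined by its edge opposite `x`, an edge of `G - x` joining two neighbours
of `x`, so there are at most `min (d(d-1)/2, |E(G - x)|)` of them. With
`f(s) = s(√(8s+1) - 3)/6` and the inequality `min (d(d-1)/2, s) + f(s) ≤ f(s + d)`, induction on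
the number of edges gives `△(G) ≤ f(|E(G)|)`. Doing one more step at a vertex of maximum degree
`Δ ≥ t` and bounding the triangles through it by `|E| - Δ` gives
`△(H) ≤ (|E| - Δ) + f(|E| - Δ)`, and `s + f(s) = s(3 + √(8s+1))/6` is increasing in `s`.
-/

/-- At `s = k(k-1)/2` this is `k(k-1)(k-2)/6`, the number of triangles of `K_k`. -/
noncomputable def triangleBound (s : ℝ) : ℝ := s * (√(8 * s + 1) - 3) / 6

lemma monotoneOn_add_triangleBound :
    MonotoneOn (fun s => s + triangleBound s) (Set.Ici 0) := by
  intro x (hx : 0 ≤ x) y _ hxy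
  have hsqrt : √(8 * x + 1) ≤ √(8 * y + 1) := Real.sqrt_le_sqrt (by linarith)
  have := mul_le_mul hxy (by linarith : 3 + √(8 * x + 1) ≤ 3 + √(8 * y + 1))
    (by positivity) (by linarith)
  simp only [triangleBound]
  linarith

lemma choose_two_add_triangleBound_le {d s : ℝ} (hd : 1 ≤ d) (hs : 0 ≤ s)
    (hsmall : 2 * d - 1 ≤ √(8 * s + 1)) :
    d * (d - 1) / 2 + triangleBound s ≤ triangleBound (s + d) := by
  set a := √(8 * s + 1)
  set b := √(8 * (s + d) + 1)
  have ha2 : a ^ 2 = 8 * s + 1 := Real.sq_sqrt (by linarith)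
  have hb2 : b ^ 2 = 8 * (s + d) + 1 := Real.sq_sqrt (by linarith)
  have ha1 : 1 ≤ a := Real.one_le_sqrt.2 (by linarith)
  have hab : a ≤ b := Real.sqrt_le_sqrt (by linarith)
  have hba : b ≤ a + 2 := by nlinarith [Real.sqrt_nonneg (8 * (s + d) + 1)]
  -- in terms of `a` and `b`, `s = (a^2 - 1)/8` and `d = (b^2 - a^2)/8`
  have key : 3 * d ^ 2 ≤ (s + d) * b - s * a := by
    nlinarith [mul_nonneg (mul_nonneg (sub_nonneg.2 hab) (sub_nonneg.2 hba))
      (by nlinarith : (0:ℝ) ≤ 3 * (b - a) ^ 2 + (12 * a - 2) * (b - a) + (12 * a ^ 2 - 4)),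
      sq_nonneg (b - a), sq_nonneg (a + b)]
  unfold triangleBound
  nlinarith

lemma self_add_triangleBound_le {d s : ℝ} (hd : 1 ≤ d) (hs : 0 ≤ s)
    (hlarge : √(8 * s + 1) < 2 * d - 1) :
    s + triangleBound s ≤ triangleBound (s + d) := by
  set a := √(8 * s + 1)
  set b := √(8 * (s + d) + 1)
  have ha2 : a ^ 2 = 8 * s + 1 := Real.sq_sqrt (by linarith)
  have hb2 : b ^ 2 = 8 * (s + d) + 1 := Real.sq_sqrt (by linarith)
  have ha1 : 1 ≤ a := Real.one_le_sqrt.2 (by linarith)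
  have hba : a + 2 ≤ b := by nlinarith [Real.sqrt_nonneg (8 * (s + d) + 1)]
  have key : s * (a + 3) ≤ (s + d) * (b - 3) := by
    nlinarith [mul_nonneg (by linarith : (0:ℝ) ≤ s + d) (by linarith : (0:ℝ) ≤ b - (a + 2)),
      mul_nonneg (by linarith : (0:ℝ) ≤ 2 * d - (a + 1)) (by linarith : (0:ℝ) ≤ a - 1)]
  unfold triangleBound
  linarith

lemma min_add_triangleBound_le {d s : ℝ} (hd : 1 ≤ d) (hs : 0 ≤ s) :
    min (d * (d - 1) / 2) s + triangleBound s ≤ triangleBound (s + d) := by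
  -- writing `s = k(k-1)/2`, the two cases are `d ≤ k` and `k < d`
  rcases le_or_gt (2 * d - 1) √(8 * s + 1) with hsmall | hlarge
  · linarith [min_le_left (d * (d - 1) / 2) s, choose_two_add_triangleBound_le hd hs hsmall]
  · linarith [min_le_right (d * (d - 1) / 2) s, self_add_triangleBound_le hd hs hlarge]

namespace SimpleGraph

lemma IsNClique.exists_erase_eq_pair [DecidableEq V] {G : SimpleGraph V} {s : Finset V} {v : V}
    (hs : G.IsNClique 3 s) (hv : v ∈ s) :
    ∃ x y, G.Adj v x ∧ G.Adj v y ∧ G.Adj x y ∧ s.erase v = {x, y} := by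
  obtain ⟨x, y, hxy, hpair⟩ := card_eq_two.1 (hs.erase_of_mem hv).card_eq
  have hx : x ∈ s.erase v := by simp [hpair]
  have hy : y ∈ s.erase v := by simp [hpair]
  exact ⟨x, y, hs.1 hv (mem_of_mem_erase hx) (ne_of_mem_erase hx).symm,
    hs.1 hv (mem_of_mem_erase hy) (ne_of_mem_erase hy).symm,
    hs.1 (mem_of_mem_erase hx) (mem_of_mem_erase hy) hxy, hpair⟩

variable [Fintype V] [DecidableEq V] (G : SimpleGraph V) [DecidableRel G.Adj]

lemma cliqueFinset_deleteIncidenceSet {n : ℕ} (hn : 2 ≤ n) (v : V) :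
    (G.deleteIncidenceSet v).cliqueFinset n = {s ∈ G.cliqueFinset n | v ∉ s} := by
  ext s
  simp only [mem_filter, mem_cliqueFinset_iff]
  constructor
  · intro hs
    refine ⟨hs.mono (G.deleteIncidenceSet_le v), fun hv => ?_⟩
    obtain ⟨u, hu, huv⟩ := s.exists_mem_ne (by rw [hs.card_eq]; omega) v
    exact (deleteIncidenceSet_adj.1 (hs.1 hu hv huv)).2.2 rfl
  · rintro ⟨hs, hv⟩
    refine ⟨fun x hx y hy hxy => deleteIncidenceSet_adj.2 ⟨hs.1 hx hy hxy, ?_, ?_⟩, hs.card_eq⟩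
    · rintro rfl; exact hv hx
    · rintro rfl; exact hv hy

lemma card_cliqueFinset_eq_card_filter_mem_add {n : ℕ} (hn : 2 ≤ n) (v : V) :
    #(G.cliqueFinset n) =
      #{s ∈ G.cliqueFinset n | v ∈ s} + #((G.deleteIncidenceSet v).cliqueFinset n) := by
  rw [G.cliqueFinset_deleteIncidenceSet hn, card_filter_add_card_filter_not]

lemma card_filter_mem_cliqueFinset_three_le_card_edgeFinset (v : V) :
    #{s ∈ G.cliqueFinset 3 | v ∈ s} ≤ #(G.deleteIncidenceSet v).edgeFinset := by
  calc #{s ∈ G.cliqueFinset 3 | v ∈ s}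
      ≤ #((G.deleteIncidenceSet v).edgeFinset.image Sym2.toFinset) := by
        refine card_le_card_of_injOn (·.erase v) (fun s hs => ?_)
          ((erase_injOn' v).mono fun s hs => (mem_filter.1 hs).2)
        obtain ⟨hs, hv⟩ := mem_filter.1 hs
        obtain ⟨x, y, hvx, hvy, hxy, hpair⟩ := (mem_cliqueFinset_iff.1 hs).exists_erase_eq_pair hv
        refine mem_image.2 ⟨s(x, y), ?_, by simp [hpair, Sym2.toFinset_mk_eq]⟩
        exact mem_edgeFinset.2 (deleteIncidenceSet_adj.2 ⟨hxy, hvx.ne', hvy.ne'⟩)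
    _ ≤ #(G.deleteIncidenceSet v).edgeFinset := card_image_le

lemma card_filter_mem_cliqueFinset_three_le_choose_degree (v : V) :
    #{s ∈ G.cliqueFinset 3 | v ∈ s} ≤ (G.degree v).choose 2 := by
  rw [← card_neighborFinset_eq_degree, ← card_powersetCard]
  refine card_le_card_of_injOn (·.erase v) (fun s hs => ?_)
    ((erase_injOn' v).mono fun s hs => (mem_filter.1 hs).2)
  obtain ⟨hs, hv⟩ := mem_filter.1 hs
  obtain ⟨x, y, hvx, hvy, -, hpair⟩ := (mem_cliqueFinset_iff.1 hs).exists_erase_eq_pair hv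
  refine mem_powersetCard.2 ⟨?_, ((mem_cliqueFinset_iff.1 hs).erase_of_mem hv).card_eq⟩
  simp [hpair, insert_subset_iff, hvx, hvy]

theorem card_cliqueFinset_three_le_triangleBound :
    (#(G.cliqueFinset 3) : ℝ) ≤ triangleBound #G.edgeFinset := by
  induction hm : #G.edgeFinset using Nat.strong_induction_on generalizing G with
  | _ m ih =>
  rcases G.edgeFinset.eq_empty_or_nonempty with hempty | ⟨e, he⟩
  · have hfree : G.CliqueFree 3 := by
      rw [edgeFinset_eq_empty.1 hempty]; exact cliqueFree_bot (by norm_num)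
    rw [hfree.cliqueFinset, ← hm, hempty]
    simp [triangleBound]
  induction e using Sym2.ind with | _ x y =>
  set d := G.degree x
  have hd : 1 ≤ d := (G.degree_pos_iff_exists_adj x).2 ⟨y, mem_edgeFinset.1 he⟩
  have hdm : d ≤ m := hm ▸ G.degree_le_card_edgeFinset x
  have hcard : #(G.deleteIncidenceSet x).edgeFinset = m - d := by
    rw [card_edgeFinset_deleteIncidenceSet, hm]
  have hrest := ih (m - d) (by omega) (G.deleteIncidenceSet x) hcard
  have hthrough : (#{s ∈ G.cliqueFinset 3 | x ∈ s} : ℝ) ≤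
      min ((d : ℝ) * (d - 1) / 2) ((m - d : ℕ) : ℝ) := by
    refine le_min ?_ ?_
    · rw [← Nat.cast_choose_two]
      exact_mod_cast G.card_filter_mem_cliqueFinset_three_le_choose_degree x
    · rw [← hcard]
      exact_mod_cast G.card_filter_mem_cliqueFinset_three_le_card_edgeFinset x
  calc (#(G.cliqueFinset 3) : ℝ)
      = #{s ∈ G.cliqueFinset 3 | x ∈ s} + #((G.deleteIncidenceSet x).cliqueFinset 3) := by
        exact_mod_cast G.card_cliqueFinset_eq_card_filter_mem_add (by norm_num) x
    _ ≤ min ((d : ℝ) * (d - 1) / 2) ((m - d : ℕ) : ℝ) + triangleBound ((m - d : ℕ) : ℝ) :=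
        add_le_add hthrough hrest
    _ ≤ triangleBound ((m - d : ℕ) + d) :=
        min_add_triangleBound_le (by exact_mod_cast hd) (Nat.cast_nonneg _)
    _ = triangleBound m := by rw [Nat.cast_sub hdm, sub_add_cancel]

theorem card_cliqueFinset_three_le_sub_degree_add_triangleBound (v : V) :
    (#(G.cliqueFinset 3) : ℝ) ≤
      (#G.edgeFinset - G.degree v) + triangleBound (#G.edgeFinset - G.degree v) := by
  have hcard : (#(G.deleteIncidenceSet v).edgeFinset : ℝ) = #G.edgeFinset - G.degree v := by
    rw [card_edgeFinset_deleteIncidenceSet, Nat.cast_sub (G.degree_le_card_edgeFinset v)]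
  have hthrough : (#{s ∈ G.cliqueFinset 3 | v ∈ s} : ℝ) ≤ #G.edgeFinset - G.degree v :=
    hcard ▸ Nat.cast_le.2 (G.card_filter_mem_cliqueFinset_three_le_card_edgeFinset v)
  have hrest := (G.deleteIncidenceSet v).card_cliqueFinset_three_le_triangleBound
  rw [hcard] at hrest
  calc (#(G.cliqueFinset 3) : ℝ)
      = #{s ∈ G.cliqueFinset 3 | v ∈ s} + #((G.deleteIncidenceSet v).cliqueFinset 3) := by
        exact_mod_cast G.card_cliqueFinset_eq_card_filter_mem_add (by norm_num) v
    _ ≤ _ := add_le_add hthrough hrest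

end SimpleGraph

lemma triangleCount_eq_card_cliqueFinset [Fintype V] [DecidableEq V] (H : SimpleGraph V)
    [DecidableRel H.Adj] : triangleCount H = #(H.cliqueFinset 3) := by
  rw [triangleCount, ← Set.ncard_coe_finset, SimpleGraph.coe_cliqueFinset]
  rfl

theorem stmt13_general [Fintype V] (H : SimpleGraph V) [DecidableRel H.Adj]
    (t : ℕ) (ht : t ≤ H.maxDegree) :
    (triangleCount H : ℝ) ≤
      ((H.edgeFinset.card : ℝ) - t) / 6 *
        (3 + Real.sqrt (8 * ((H.edgeFinset.card : ℝ) - t) + 1)) := by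
  classical
  set m : ℝ := ((#H.edgeFinset : ℕ) : ℝ)
  have hrhs : (m - t) / 6 * (3 + √(8 * (m - t) + 1)) = (m - t) + triangleBound (m - t) := by
    unfold triangleBound; ring
  rw [hrhs, triangleCount_eq_card_cliqueFinset]
  obtain rfl | htpos := Nat.eq_zero_or_pos t
  · simp only [CharP.cast_eq_zero, sub_zero]
    linarith [H.card_cliqueFinset_three_le_triangleBound, Nat.cast_nonneg (α := ℝ) #H.edgeFinset]
  have : Nonempty V := not_isEmpty_iff.1 fun _ => by
    rw [H.maxDegree_of_subsingleton] at ht; omega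
  obtain ⟨v, hv⟩ := H.exists_maximal_degree_vertex
  calc (#(H.cliqueFinset 3) : ℝ) ≤ (m - H.degree v) + triangleBound (m - H.degree v) :=
        H.card_cliqueFinset_three_le_sub_degree_add_triangleBound v
    _ ≤ (m - t) + triangleBound (m - t) := by
        have hdeg : (H.degree v : ℝ) ≤ m := Nat.cast_le.2 (H.degree_le_card_edgeFinset v)
        have htd : (t : ℝ) ≤ H.degree v := by exact_mod_cast hv ▸ ht
        exact monotoneOn_add_triangleBound (sub_nonneg.2 hdeg)
          (sub_nonneg.2 (htd.trans hdeg)) (by linarith)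

theorem stmt13 [Fintype V] [DecidableEq V] (H : SimpleGraph V) [DecidableRel H.Adj]
    (t : ℕ) (ht : t ≤ H.maxDegree) :
    (triangleCount H : ℝ) ≤
      ((H.edgeFinset.card : ℝ) - t) / 6 *
        (3 + Real.sqrt (8 * ((H.edgeFinset.card : ℝ) - t) + 1)) :=
  stmt13_general H t ht
end

section
/- Let G = (V,E) be a simple graph with m ≥ 4 edges. Then for every edge e of G, |NB₂(G/e)| ≥ (m−1)(m−3)/8. -/
open Finset

variable {V : Type*}

/-! Write `H = G/uv`, `q = |E(H - u)|` and `d = deg_H u`. Every edge of `G` other than `uv`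
either avoids `u` and `v`, and is then an edge of `H - u`, or joins `u` or `v` to a neighbour of
`u` in `H`; hence `m - 1 ≤ q + 2d`. A triangle of `H` through `u` is determined by its edge in
`H - u` and by its two vertices in `N_H(u)`, so there are at most `min(q, C(d,2))` of them. The
other triangles lie in `H - u`; each has three pairs of adjacent edges and a pair of adjacent
edges spans at most one triangle, so there are at most `C(q,2)/3` of them. Since
`|E(H)| = q + d`, this gives `8 NB₂(H) ≥ (q + 2d)(q + 2d - 2) ≥ (m - 1)(m - 3)`. -/
lemma mul_sub_two_le_of_triangle_bounds (q d a b : ℕ) (haq : a ≤ q) (had : a ≤ d.choose 2)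
    (hbq : 3 * b ≤ q.choose 2) :
    ((q : ℝ) + 2 * d) * (q + 2 * d - 2) ≤ 8 * (((q + d).choose 2 : ℕ) - a - b) := by
  have hb : 6 * (b : ℝ) ≤ q * (q - 1) := by
    have := Nat.cast_choose_two ℝ q ▸ (Nat.cast_le (α := ℝ).2 hbq); push_cast at this; linarith
  have haq' : (a : ℝ) ≤ q := by exact_mod_cast haq
  rw [Nat.cast_choose_two]
  push_cast
  -- three times the slack is at least `q (5q + 12d - 26) + 24 (q - a)`
  rcases le_or_gt 26 (5 * q + 12 * d) with hlarge | hsmall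
  · have hlarge' : (26 : ℝ) ≤ 5 * q + 12 * d := by exact_mod_cast hlarge
    nlinarith [mul_nonneg (Nat.cast_nonneg q) (sub_nonneg.2 hlarge')]
  · have hd : d ≤ 2 := by omega
    interval_cases d
    · obtain rfl : a = 0 := by simpa using had
      nlinarith [Nat.cast_nonneg (α := ℝ) b]
    · obtain rfl : a = 0 := by simpa using had
      nlinarith [Nat.cast_nonneg (α := ℝ) b, Nat.cast_nonneg (α := ℝ) q]
    · obtain rfl : q = 0 := by omega
      obtain rfl : a = 0 := by omega
      obtain rfl : b = 0 := by simpa using hbq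
      norm_num

namespace SimpleGraph

variable [Fintype V] [DecidableEq V] (K : SimpleGraph V) [DecidableRel K.Adj]

lemma injOn_sigma_cliqueFinset_three_edgesAt :
    Set.InjOn (fun p : (_ : Finset V) × V => (p.1.erase p.2).image (s(p.2, ·)))
      ((K.cliqueFinset 3).sigma fun s => s : Set _) := by
  rintro ⟨s, x⟩ hsx ⟨s', x'⟩ hsx' h
  simp only [coe_sigma, Set.mem_sigma_iff, mem_coe] at hsx hsx' h
  have hmem : ∀ y ∈ s.erase x, x' = x ∨ x' = y := fun y hy => by
    obtain ⟨z, -, hz⟩ := mem_image.1 (h ▸ mem_image_of_mem (s(x, ·)) hy)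
    exact Sym2.mem_iff.1 (hz ▸ Sym2.mem_mk_left x' z)
  have hxx : x = x' := by
    by_contra hne
    have hcard : #(s.erase x) = 2 := by
      rw [card_erase_of_mem hsx.2, (mem_cliqueFinset_iff.1 hsx.1).card_eq]
    obtain ⟨y, z, hyz, hs⟩ := card_eq_two.1 hcard
    have hy := hmem y (by simp [hs])
    have hz := hmem z (by simp [hs])
    grind
  subst hxx
  have herase := image_injective (fun _ _ => Sym2.congr_right.1) h
  rw [← insert_erase hsx.2, ← insert_erase hsx'.2, herase]

theorem three_mul_card_cliqueFinset_three_le :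
    3 * #(K.cliqueFinset 3) ≤ (#K.edgeFinset).choose 2 := by
  have hsigma : #((K.cliqueFinset 3).sigma fun s => s) = 3 * #(K.cliqueFinset 3) := by
    rw [card_sigma, sum_const_nat fun s hs => (mem_cliqueFinset_iff.1 hs).card_eq, mul_comm]
  rw [← hsigma, ← card_powersetCard]
  refine card_le_card_of_injOn _ ?_ K.injOn_sigma_cliqueFinset_three_edgesAt
  rintro ⟨s, x⟩ hsx
  simp only [coe_sigma, Set.mem_sigma_iff, mem_coe] at hsx
  obtain ⟨hs, hx⟩ := hsx
  have hs' := mem_cliqueFinset_iff.1 hs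
  rw [mem_coe, mem_powersetCard, card_image_of_injective _ (fun _ _ => Sym2.congr_right.1),
    card_erase_of_mem hx, hs'.card_eq]
  refine ⟨fun e he => ?_, rfl⟩
  obtain ⟨y, hy, rfl⟩ := mem_image.1 he
  exact mem_edgeFinset.2 (hs'.isClique hx (mem_of_mem_erase hy) (ne_of_mem_erase hy).symm)

lemma card_cliqueFinset_three_filter_mem_le_card_edgeFinset (w : V) :
    #{s ∈ K.cliqueFinset 3 | w ∈ s} ≤ #(K.deleteIncidenceSet w).edgeFinset := by
  refine card_le_card_of_surjOn (fun e => insert w e.toFinset) fun s hs => ?_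
  obtain ⟨hs, hw⟩ := mem_filter.1 hs
  have hs' := mem_cliqueFinset_iff.1 hs
  obtain ⟨y, z, hyz, hpair⟩ := card_eq_two.1
    (show #(s.erase w) = 2 by rw [card_erase_of_mem hw, hs'.card_eq])
  have hy : y ∈ s.erase w := by simp [hpair]
  have hz : z ∈ s.erase w := by simp [hpair]
  refine ⟨s(y, z), mem_edgeFinset.2 (deleteIncidenceSet_adj.2
    ⟨hs'.isClique (mem_of_mem_erase hy) (mem_of_mem_erase hz) hyz, ne_of_mem_erase hy,
      ne_of_mem_erase hz⟩), ?_⟩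
  change insert w s(y, z).toFinset = s
  rw [Sym2.toFinset_mk_eq, ← hpair, insert_erase hw]

lemma card_cliqueFinset_three_filter_mem_le_choose_degree (w : V) :
    #{s ∈ K.cliqueFinset 3 | w ∈ s} ≤ (K.degree w).choose 2 := by
  rw [← card_neighborFinset_eq_degree, ← card_powersetCard]
  refine card_le_card_of_injOn (·.erase w) (fun s hs => ?_) fun s hs t ht h => ?_
  · obtain ⟨hs, hw⟩ := mem_filter.1 hs
    have hs' := mem_cliqueFinset_iff.1 hs
    refine mem_powersetCard.2 ⟨fun y hy => ?_, by rw [card_erase_of_mem hw, hs'.card_eq]⟩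
    exact (mem_neighborFinset _ _ _).2
      (hs'.isClique hw (mem_of_mem_erase hy) (ne_of_mem_erase hy).symm)
  · rw [← insert_erase (mem_filter.1 hs).2, ← insert_erase (mem_filter.1 ht).2]
    exact congrArg (insert w) h

lemma filter_notMem_cliqueFinset_three_subset (w : V) :
    {s ∈ K.cliqueFinset 3 | w ∉ s} ⊆ (K.deleteIncidenceSet w).cliqueFinset 3 := by
  intro s hs
  obtain ⟨hs, hw⟩ := mem_filter.1 hs
  have hs' := mem_cliqueFinset_iff.1 hs
  refine mem_cliqueFinset_iff.2 ⟨fun x hx y hy hxy => deleteIncidenceSet_adj.2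
    ⟨hs'.isClique hx hy hxy, ne_of_mem_of_not_mem hx hw, ne_of_mem_of_not_mem hy hw⟩,
    hs'.card_eq⟩

lemma card_edgeFinset_eq_add_degree (w : V) :
    #K.edgeFinset = #(K.deleteIncidenceSet w).edgeFinset + K.degree w := by
  rw [card_edgeFinset_deleteIncidenceSet, Nat.sub_add_cancel (K.degree_le_card_edgeFinset w)]

lemma NB2_eq : NB2 K = (#K.edgeFinset).choose 2 - #(K.cliqueFinset 3) := by
  have htriangles : {s | K.IsNClique 3 s} = (K.cliqueFinset 3 : Set (Finset V)) := by ext; simp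
  rw [NB2, triangleCount, htriangles, ← coe_edgeFinset, Set.ncard_coe_finset,
    Set.ncard_coe_finset]

theorem mul_sub_two_le_eight_mul_NB2 (w : V) :
    ((#(K.deleteIncidenceSet w).edgeFinset : ℝ) + 2 * K.degree w) *
      (#(K.deleteIncidenceSet w).edgeFinset + 2 * K.degree w - 2) ≤ 8 * NB2 K := by
  have hsplit := card_filter_add_card_filter_not (s := K.cliqueFinset 3) (w ∈ ·)
  have havoid : 3 * #{s ∈ K.cliqueFinset 3 | w ∉ s} ≤
      (#(K.deleteIncidenceSet w).edgeFinset).choose 2 :=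
    (Nat.mul_le_mul_left 3 (card_le_card (K.filter_notMem_cliqueFinset_three_subset w))).trans
      (K.deleteIncidenceSet w).three_mul_card_cliqueFinset_three_le
  refine (mul_sub_two_le_of_triangle_bounds _ _ _ _
    (K.card_cliqueFinset_three_filter_mem_le_card_edgeFinset w)
    (K.card_cliqueFinset_three_filter_mem_le_choose_degree w) havoid).trans ?_
  rw [NB2_eq, ← card_edgeFinset_eq_add_degree, ← hsplit, sub_sub, ← Nat.cast_add]
  gcongr
  exact sub_le_iff_le_add.2 (by exact_mod_cast le_tsub_add)

end SimpleGraph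

section Contraction

open SimpleGraph

variable (G : SimpleGraph V) (u v : V)

instance [DecidableEq V] [DecidableRel G.Adj] : DecidableRel (contractE G u v).Adj :=
  inferInstanceAs (DecidableRel (SimpleGraph.fromRel _).Adj)

lemma deleteIncidenceSet_le_contractE : G.deleteIncidenceSet v ≤ contractE G u v := by
  intro a b h
  obtain ⟨hab, hav, hbv⟩ := deleteIncidenceSet_adj.1 h
  exact (fromRel_adj _ a b).2 ⟨hab.ne, Or.inl (Or.inl ⟨hab, hav, hbv⟩)⟩

lemma contractE_deleteIncidenceSet :
    (contractE G u v).deleteIncidenceSet u = (G.deleteIncidenceSet v).deleteIncidenceSet u := by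
  ext a b
  simp only [deleteIncidenceSet_adj, contractE, fromRel_adj]
  grind [SimpleGraph.adj_comm, SimpleGraph.Adj.ne]

variable [Fintype V] [DecidableEq V] [DecidableRel G.Adj]

lemma degree_le_degree_contractE_add_one : G.degree v ≤ (contractE G u v).degree u + 1 := by
  rw [← card_neighborFinset_eq_degree, ← card_neighborFinset_eq_degree]
  refine (card_le_card fun x hx => ?_).trans (card_insert_le u _)
  rw [mem_neighborFinset] at hx
  rcases eq_or_ne x u with rfl | hxu
  · exact mem_insert_self _ _
  · exact mem_insert_of_mem ((mem_neighborFinset _ _ _).2 ((fromRel_adj _ u x).2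
      ⟨hxu.symm, Or.inl (Or.inr ⟨rfl, hx.ne', hx⟩)⟩))

lemma card_edgeFinset_le_of_contractE :
    #G.edgeFinset ≤
      #((contractE G u v).deleteIncidenceSet u).edgeFinset + 2 * (contractE G u v).degree u + 1 := by
  have hrest : #((contractE G u v).deleteIncidenceSet u).edgeFinset =
      #((G.deleteIncidenceSet v).deleteIncidenceSet u).edgeFinset := by
    congr 1
    ext e
    rw [mem_edgeFinset, mem_edgeFinset, contractE_deleteIncidenceSet]
  have hu := degree_le_of_le (v := u) (deleteIncidenceSet_le_contractE G u v)
  have hv := degree_le_degree_contractE_add_one G u v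
  rw [G.card_edgeFinset_eq_add_degree v, (G.deleteIncidenceSet v).card_edgeFinset_eq_add_degree u,
    hrest]
  omega

end Contraction

theorem stmt14_general [Fintype V] [DecidableEq V] (G : SimpleGraph V) [DecidableRel G.Adj]
    (m : ℕ) (hm : m = G.edgeFinset.card) (hm4 : 4 ≤ m)
    (u v : V) :
    ((m : ℝ) - 1) * ((m : ℝ) - 3) / 8 ≤ (NB2 (contractE G u v) : ℝ) := by
  set H := contractE G u v
  have hedges : (m : ℝ) - 1 ≤ #(H.deleteIncidenceSet u).edgeFinset + 2 * H.degree u := by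
    have := hm ▸ card_edgeFinset_le_of_contractE G u v
    rw [sub_le_iff_le_add]
    exact_mod_cast this
  have hm4' : (4 : ℝ) ≤ m := by exact_mod_cast hm4
  nlinarith [H.mul_sub_two_le_eight_mul_NB2 u, mul_nonneg (sub_nonneg.2 hedges)
    (by linarith : (0 : ℝ) ≤ #(H.deleteIncidenceSet u).edgeFinset + 2 * H.degree u + m - 3)]

theorem stmt14 [Fintype V] [DecidableEq V] (G : SimpleGraph V) [DecidableRel G.Adj]
    (m : ℕ) (hm : m = G.edgeFinset.card) (hm4 : 4 ≤ m)
    (u v : V) (huv : G.Adj u v) :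
    ((m : ℝ) - 1) * ((m : ℝ) - 3) / 8 ≤ (NB2 (contractE G u v) : ℝ) :=
  stmt14_general G m hm hm4 u v
end
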